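/- arXiv:2101.04813 — 3 statements merged into one kernel-verified Lean document; each statement's English description precedes it below -/
import Mathlib

section
/- Let Q : ℝ³ → ℝ be defined by Q(x) = (1 + |x|/2)⁻¹, and let the energy be E(Q) = ∫_{ℝ³} (1/2)|∇Q(x)|² − (1/4)|x|⁻¹ Q(x)⁴ dx. Then E(Q) = 2π/3. -/
/-!
`Q = φ ∘ ‖·‖` with `φ r = (1 + r/2)⁻¹`, and `φ' = -φ²/2`, so `|∇Q|² = φ(|x|)⁴/4` away from the
origin. Polar coordinates turn `E(Q)` into `4π ∫₀^∞ r² (1/8 - 1/(4r)) φ(r)⁴ dr`; writing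
`r = 2(u - 1)` with `u = 1 + r/2` the integrand becomes `u⁻²/2 - 3u⁻³/2 + u⁻⁴`, and
`∫₀^∞ (1 + r/2)^{-(k+1)} dr = 2/k` gives `1 - 3/2 + 2/3 = 1/6`.
-/

open MeasureTheory

noncomputable def groundStateQ (x : EuclideanSpace ℝ (Fin 3)) : ℝ :=
  (1 + ‖x‖ / 2)⁻¹

open Filter Set Real Topology

theorem hasFDerivAt_norm {E : Type*} [NormedAddCommGroup E] [InnerProductSpace ℝ E] {x : E}
    (hx : x ≠ 0) : HasFDerivAt (‖·‖) (‖x‖⁻¹ • innerSL ℝ x) x := by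
  have hsq : ‖x‖ ^ 2 ≠ 0 := by positivity
  convert (hasStrictFDerivAt_norm_sq x).hasFDerivAt.sqrt hsq using 1
  · ext y; simp
  · ext y
    simp only [smul_apply, coe_innerSL_apply, smul_eq_mul, Real.sqrt_sq (norm_nonneg x),
      nsmul_eq_mul, Nat.cast_ofNat]
    field_simp

theorem sum_sq_fderiv_comp_norm_single {ι : Type*} [Fintype ι] [DecidableEq ι] {φ : ℝ → ℝ}
    {φ' : ℝ} {x : EuclideanSpace ℝ ι} (hx : x ≠ 0) (hφ : HasDerivAt φ φ' ‖x‖) :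
    ∑ i, (fderiv ℝ (fun y ↦ φ ‖y‖) x (EuclideanSpace.single i 1)) ^ 2 = φ' ^ 2 := by
  have hx' : ‖x‖ ≠ 0 := norm_ne_zero_iff.2 hx
  have hd : HasFDerivAt (fun y : EuclideanSpace ℝ ι ↦ φ ‖y‖) (φ' • ‖x‖⁻¹ • innerSL ℝ x) x :=
    hφ.comp_hasFDerivAt x (hasFDerivAt_norm hx)
  have hnorm : ∑ i, x i ^ 2 = ‖x‖ ^ 2 := by
    simp [EuclideanSpace.norm_sq_eq, Real.norm_eq_abs, sq_abs]
  simp only [hd.fderiv, smul_apply, innerSL_apply_apply, EuclideanSpace.inner_single_right,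
    smul_eq_mul, one_mul, starRingEnd_apply, star_trivial, mul_pow, ← Finset.mul_sum, hnorm]
  field_simp

section InvOneAddDiv

variable {c : ℝ}

theorem hasDerivAt_inv_one_add_div {r : ℝ} (h : 1 + r / c ≠ 0) :
    HasDerivAt (fun r ↦ (1 + r / c)⁻¹) (-c⁻¹ * ((1 + r / c)⁻¹) ^ 2) r := by
  refine ((((hasDerivAt_id r).div_const c).const_add 1).inv h).congr_deriv ?_
  simp only [id]
  field_simp

theorem hasDerivAt_inv_one_add_div_pow (hc : c ≠ 0) {k : ℕ} (hk : k ≠ 0) {r : ℝ}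
    (h : 1 + r / c ≠ 0) :
    HasDerivAt (fun r ↦ -(c / k) * ((1 + r / c)⁻¹) ^ k) (((1 + r / c)⁻¹) ^ (k + 1)) r := by
  refine (((hasDerivAt_inv_one_add_div h).pow k).const_mul (-(c / k))).congr_deriv ?_
  obtain ⟨j, rfl⟩ := Nat.exists_eq_succ_of_ne_zero hk
  generalize (1 + r / c)⁻¹ = u
  simp only [Nat.succ_eq_add_one, Nat.add_sub_cancel]
  field_simp
  ring

theorem tendsto_inv_one_add_div_atTop (hc : 0 < c) :
    Tendsto (fun r ↦ (1 + r / c)⁻¹) atTop (𝓝 0) :=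
  (tendsto_atTop_add_const_left _ 1 (tendsto_id.atTop_div_const hc)).inv_tendsto_atTop

theorem integral_Ioi_inv_one_add_div_pow (hc : 0 < c) {k : ℕ} (hk : k ≠ 0) :
    IntegrableOn (fun r ↦ ((1 + r / c)⁻¹) ^ (k + 1)) (Ioi 0) ∧
      ∫ r in Ioi 0, ((1 + r / c)⁻¹) ^ (k + 1) = c / k := by
  have hpos {r : ℝ} (hr : 0 ≤ r) : 0 < 1 + r / c := by positivity
  have hderiv (r : ℝ) (hr : r ∈ Ici 0) := hasDerivAt_inv_one_add_div_pow hc.ne' hk (hpos hr).ne'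
  have hnonneg (r : ℝ) (hr : r ∈ Ioi 0) : 0 ≤ ((1 + r / c)⁻¹) ^ (k + 1) := by
    have := hpos (le_of_lt hr); positivity
  have hlim : Tendsto (fun r ↦ -(c / k) * ((1 + r / c)⁻¹) ^ k) atTop (𝓝 0) := by
    simpa [hk] using ((tendsto_inv_one_add_div_atTop hc).pow k).const_mul (-(c / k))
  refine ⟨integrableOn_Ioi_deriv_of_nonneg' hderiv hnonneg hlim, ?_⟩
  rw [integral_Ioi_of_hasDerivAt_of_nonneg' hderiv hnonneg hlim]
  simp

end InvOneAddDiv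

theorem integral_fun_norm_euclideanSpace_fin_three {F : Type*} [NormedAddCommGroup F]
    [NormedSpace ℝ F] (f : ℝ → F) :
    ∫ x : EuclideanSpace ℝ (Fin 3), f ‖x‖ = (4 * π) • ∫ r in Ioi 0, r ^ 2 • f r := by
  rw [integral_fun_norm_addHaar volume f, finrank_euclideanSpace_fin, measureReal_def,
    EuclideanSpace.volume_ball_fin_three, ENNReal.ofReal_one, one_pow, one_mul,
    ENNReal.toReal_ofReal (by positivity), ← Nat.cast_smul_eq_nsmul ℝ, smul_smul]
  congr 1
  ring

noncomputable def groundStateEnergyDensity (r : ℝ) : ℝ :=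
  (1 / 8 - r⁻¹ / 4) * ((1 + r / 2)⁻¹) ^ 4

theorem groundStateQ_energyDensity_eq {x : EuclideanSpace ℝ (Fin 3)} (hx : x ≠ 0) :
    (1 / 2) * ∑ i : Fin 3, (fderiv ℝ groundStateQ x (EuclideanSpace.single i (1 : ℝ))) ^ 2
        - (1 / 4) * (‖x‖⁻¹ * (groundStateQ x) ^ 4)
      = groundStateEnergyDensity ‖x‖ := by
  have hpos : 0 < 1 + ‖x‖ / 2 := by positivity
  rw [show groundStateQ = fun y ↦ (1 + ‖y‖ / 2)⁻¹ from rfl,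
    sum_sq_fderiv_comp_norm_single hx (hasDerivAt_inv_one_add_div hpos.ne'),
    groundStateEnergyDensity]
  ring

theorem integral_Ioi_sq_smul_groundStateEnergyDensity :
    ∫ r in Ioi (0 : ℝ), r ^ 2 • groundStateEnergyDensity r = 1 / 6 := by
  have hpow (k : ℕ) (hk : k ≠ 0) := integral_Ioi_inv_one_add_div_pow (c := 2) two_pos hk
  obtain ⟨hi2, hv2⟩ := hpow 1 one_ne_zero
  obtain ⟨hi3, hv3⟩ := hpow 2 two_ne_zero
  obtain ⟨hi4, hv4⟩ := hpow 3 three_ne_zero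
  have hexpand : EqOn (fun r : ℝ ↦ r ^ 2 • groundStateEnergyDensity r)
      (fun r ↦ (1 / 2 * ((1 + r / 2)⁻¹) ^ (1 + 1) - 3 / 2 * ((1 + r / 2)⁻¹) ^ (2 + 1))
        + ((1 + r / 2)⁻¹) ^ (3 + 1)) (Ioi 0) := by
    intro r (hr : 0 < r)
    have : 1 + r / 2 ≠ 0 := by positivity
    simp only [groundStateEnergyDensity, smul_eq_mul, Nat.reduceAdd]
    field_simp
    ring
  have hi23 : IntegrableOn (fun r : ℝ ↦
      1 / 2 * ((1 + r / 2)⁻¹) ^ (1 + 1) - 3 / 2 * ((1 + r / 2)⁻¹) ^ (2 + 1)) (Ioi 0) :=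
    (hi2.const_mul _).sub (hi3.const_mul _)
  rw [setIntegral_congr_fun measurableSet_Ioi hexpand, integral_add hi23 hi4,
    integral_sub (hi2.const_mul _) (hi3.const_mul _), integral_const_mul, integral_const_mul,
    hv2, hv3, hv4]
  norm_num

/-- The energy of the ground state:
`E(Q) = ∫ (1/2)|∇Q|² − (1/4)|x|⁻¹ Q⁴ dx = 2π/3`,
where `|∇Q(x)|²` is the sum of the squares of the partial derivatives of `Q` at `x`. -/
theorem groundState_energy :
    (∫ x : EuclideanSpace ℝ (Fin 3),
        ((1 / 2) * ∑ i : Fin 3,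
            (fderiv ℝ groundStateQ x (EuclideanSpace.single i (1 : ℝ))) ^ 2)
          - (1 / 4) * (‖x‖⁻¹ * (groundStateQ x) ^ 4))
      = 2 * Real.pi / 3 := by
  rw [integral_congr_ae ((Measure.ae_ne volume 0).mono fun _ ↦ groundStateQ_energyDensity_eq),
    integral_fun_norm_euclideanSpace_fin_three, integral_Ioi_sq_smul_groundStateEnergyDensity,
    smul_eq_mul]
  ring
end

section
/- Energy trapping (quantitative form). Let δ₀ ∈ (0,1]. Suppose f : ℝ³ → ℂ is measurable with almost-everywhere defined gradient, with K := ∫_{ℝ³}|∇f(x)|² dx finite and P := ∫_{ℝ³}|x|⁻¹|f(x)|⁴ dx finite, and suppose f obeys the sharp embedding bound P ≤ (3/(8π)) K². If the energy E(f) := K/2 − P/4 satisfies E(f) < (1 − δ₀)·(2π/3) and K ≤ 8π/3, then K < (8π/3)·(1 − √δ₀). -/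
open MeasureTheory

/-- The kinetic energy `K = ∫_{ℝ³} |∇f(x)|² dx`, where `|∇f(x)|²` is the sum of the
squared norms of the partial derivatives of `f` at `x`. -/
noncomputable def kineticEnergy (f : EuclideanSpace ℝ (Fin 3) → ℂ) : ℝ :=
  ∫ x : EuclideanSpace ℝ (Fin 3),
    ∑ i : Fin 3, ‖fderiv ℝ f x (EuclideanSpace.single i (1 : ℝ))‖ ^ 2

/-- The potential energy `P = ∫_{ℝ³} |x|⁻¹ |f(x)|⁴ dx`. -/
noncomputable def potentialEnergy (f : EuclideanSpace ℝ (Fin 3) → ℂ) : ℝ :=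
  ∫ x : EuclideanSpace ℝ (Fin 3), ‖x‖⁻¹ * ‖f x‖ ^ 4

/-- Energy trapping: if `f` obeys the sharp embedding bound `P ≤ (3/(8π))K²`, has energy
`E(f) = K/2 − P/4 < (1−δ₀)(2π/3)` and kinetic energy `K ≤ 8π/3`, then
`K < (8π/3)(1 − √δ₀)`. -/
theorem energy_trapping (δ₀ : ℝ) (hδ₀ : 0 < δ₀) (hδ₀' : δ₀ ≤ 1)
    (f : EuclideanSpace ℝ (Fin 3) → ℂ)
    (hKfin : Integrable (fun x : EuclideanSpace ℝ (Fin 3) =>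
      ∑ i : Fin 3, ‖fderiv ℝ f x (EuclideanSpace.single i (1 : ℝ))‖ ^ 2))
    (hPfin : Integrable (fun x : EuclideanSpace ℝ (Fin 3) => ‖x‖⁻¹ * ‖f x‖ ^ 4))
    (hsharp : potentialEnergy f ≤ (3 / (8 * Real.pi)) * (kineticEnergy f) ^ 2)
    (hE : kineticEnergy f / 2 - potentialEnergy f / 4 < (1 - δ₀) * (2 * Real.pi / 3))
    (hK : kineticEnergy f ≤ 8 * Real.pi / 3) :
    kineticEnergy f < (8 * Real.pi / 3) * (1 - Real.sqrt δ₀) := by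
  have hπ : (0:ℝ) < Real.pi := Real.pi_pos
  set K := kineticEnergy f
  set P := potentialEnergy f
  set s := Real.sqrt δ₀ with hs
  have hs0 : 0 < s := Real.sqrt_pos.mpr hδ₀
  have hs2 : s ^ 2 = δ₀ := Real.sq_sqrt hδ₀.le
  have hsharp' : P ≤ 3 / (8 * Real.pi) * K ^ 2 := hsharp
  have key : 3 / (8 * Real.pi) * K ^ 2 * (1/4) ≥ P / 4 := by linarith
  have h1 : K / 2 - 3 / (8 * Real.pi) * K ^ 2 / 4 < (1 - s ^ 2) * (2 * Real.pi / 3) := by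
    rw [hs2]; linarith
  have h1' : K / 2 * (8 * Real.pi) - 3 * K ^ 2 / 4
      < (1 - s ^ 2) * (2 * Real.pi / 3) * (8 * Real.pi) := by
    have := mul_lt_mul_of_pos_right h1 (by positivity : (0:ℝ) < 8 * Real.pi)
    calc K / 2 * (8 * Real.pi) - 3 * K ^ 2 / 4
        = (K / 2 - 3 / (8 * Real.pi) * K ^ 2 / 4) * (8 * Real.pi) := by
          field_simp
      _ < _ := this
  nlinarith [mul_pos hπ hπ, sq_nonneg (8 * Real.pi - 3 * K - 8 * Real.pi * s),
    mul_pos hs0 hπ]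
end

section
/- Nonlinear estimate in Strichartz spaces. There exists a constant C > 0 such that for every smooth compactly supported function u : ℝ × ℝ³ → ℂ and every interval I ⊆ ℝ, one has ( ∫_I ( ∫_{ℝ³} |∇ₓ( |x|⁻¹ |u(t,x)|² u(t,x) )|^{6/5} dx )^{5/3} dt )^{1/2} ≤ C · ( ∫_I ∫_{ℝ³} |u(t,x)|^{10} dx dt )^{1/10} · ( ( ∫_I ( ∫_{ℝ³} |∇ₓ u(t,x)|^{30/11} dx )^{11/6} dt )^{1/5} )², where ∇ₓ denotes the spatial gradient (defined for x ≠ 0 in the first expression). -/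
open MeasureTheory

/-- The Euclidean norm of the spatial gradient of `g : ℝ³ → ℂ` at `x`: the square root
of the sum of the squared norms of the partial derivatives. -/
noncomputable def gradNorm (g : EuclideanSpace ℝ (Fin 3) → ℂ)
    (x : EuclideanSpace ℝ (Fin 3)) : ℝ :=
  Real.sqrt (∑ i : Fin 3, ‖fderiv ℝ g x (EuclideanSpace.single i (1 : ℝ))‖ ^ 2)

open Set

noncomputable section

abbrev E3 : Type := EuclideanSpace ℝ (Fin 3)

lemma gradNorm_nonneg (g : E3 → ℂ) (x : E3) : 0 ≤ gradNorm g x := Real.sqrt_nonneg _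

lemma sqrt_sum_mono {f g : Fin 3 → ℝ} (h : ∀ i, |f i| ≤ g i) :
    Real.sqrt (∑ i, f i ^ 2) ≤ Real.sqrt (∑ i, g i ^ 2) := by
  apply Real.sqrt_le_sqrt
  apply Finset.sum_le_sum
  intro i _
  calc f i ^ 2 = |f i| ^ 2 := (sq_abs _).symm
    _ ≤ g i ^ 2 := by
        have := h i
        have h0 : (0:ℝ) ≤ |f i| := abs_nonneg _
        nlinarith

lemma sqrt_sum_sq_add_le (f g : Fin 3 → ℝ) :
    Real.sqrt (∑ i, (f i + g i) ^ 2) ≤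
      Real.sqrt (∑ i, f i ^ 2) + Real.sqrt (∑ i, g i ^ 2) := by
  have key : ∀ h : Fin 3 → ℝ,
      Real.sqrt (∑ i, h i ^ 2) = ‖(WithLp.equiv 2 (Fin 3 → ℝ)).symm h‖ := by
    intro h
    rw [EuclideanSpace.norm_eq]
    congr 1
    apply Finset.sum_congr rfl
    intro i _
    change _ = ‖h i‖ ^ 2
    rw [Real.norm_eq_abs, sq_abs]
  have : (WithLp.equiv 2 (Fin 3 → ℝ)).symm (fun i => f i + g i)
      = (WithLp.equiv 2 (Fin 3 → ℝ)).symm f + (WithLp.equiv 2 (Fin 3 → ℝ)).symm g := by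
    ext i
    simp [WithLp.equiv_symm_apply]
  calc Real.sqrt (∑ i, (f i + g i) ^ 2)
      = ‖(WithLp.equiv 2 (Fin 3 → ℝ)).symm (fun i => f i + g i)‖ := key _
    _ = ‖(WithLp.equiv 2 (Fin 3 → ℝ)).symm f + (WithLp.equiv 2 (Fin 3 → ℝ)).symm g‖ := by
        rw [this]
    _ ≤ _ := by rw [key f, key g]; exact norm_add_le _ _

lemma sqrt_sum_sq_const_mul (c : ℝ) (hc : 0 ≤ c) (f : Fin 3 → ℝ) :
    Real.sqrt (∑ i, (c * f i) ^ 2) = c * Real.sqrt (∑ i, f i ^ 2) := by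
  have : ∑ i, (c * f i) ^ 2 = c ^ 2 * ∑ i, f i ^ 2 := by
    rw [Finset.mul_sum]; apply Finset.sum_congr rfl; intro i _; ring
  rw [this, Real.sqrt_mul (sq_nonneg c), Real.sqrt_sq hc]

/-- Cauchy-Schwarz bound for a continuous linear map in terms of `gradNorm`-type data. -/
lemma clm_apply_le (L : E3 →L[ℝ] ℂ) (w : E3) :
    ‖L w‖ ≤ ‖w‖ * Real.sqrt (∑ i, ‖L (EuclideanSpace.single i (1:ℝ))‖ ^ 2) := by
  have hw : w = ∑ i, w i • EuclideanSpace.single i (1:ℝ) := by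
    ext j
    rw [WithLp.ofLp_sum, Fintype.sum_apply]
    simp [EuclideanSpace.single_apply]
  calc ‖L w‖ = ‖∑ i, w i • L (EuclideanSpace.single i (1:ℝ))‖ := by
        conv_lhs => rw [hw]
        rw [map_sum]
        congr 1
        apply Finset.sum_congr rfl
        intro i _
        rw [_root_.map_smul]
    _ ≤ ∑ i, ‖w i • L (EuclideanSpace.single i (1:ℝ))‖ := norm_sum_le _ _
    _ = ∑ i, |w i| * ‖L (EuclideanSpace.single i (1:ℝ))‖ := by
        apply Finset.sum_congr rfl; intro i _; rw [norm_smul, Real.norm_eq_abs]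
    _ ≤ Real.sqrt (∑ i, |w i| ^ 2) * Real.sqrt (∑ i, ‖L (EuclideanSpace.single i (1:ℝ))‖ ^ 2) := by
        have := Finset.sum_mul_sq_le_sq_mul_sq Finset.univ (fun i => |w i|)
          (fun i => ‖L (EuclideanSpace.single i (1:ℝ))‖)
        have h1 : (0:ℝ) ≤ ∑ i, |w i| ^ 2 := Finset.sum_nonneg fun i _ => sq_nonneg _
        have h2 : (0:ℝ) ≤ ∑ i, ‖L (EuclideanSpace.single i (1:ℝ))‖ ^ 2 :=
          Finset.sum_nonneg fun i _ => sq_nonneg _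
        have h3 : (0:ℝ) ≤ ∑ i, |w i| * ‖L (EuclideanSpace.single i (1:ℝ))‖ :=
          Finset.sum_nonneg fun i _ => mul_nonneg (abs_nonneg _) (norm_nonneg _)
        calc ∑ i, |w i| * ‖L (EuclideanSpace.single i (1:ℝ))‖
            = Real.sqrt ((∑ i, |w i| * ‖L (EuclideanSpace.single i (1:ℝ))‖) ^ 2) :=
              (Real.sqrt_sq h3).symm
          _ ≤ Real.sqrt ((∑ i, |w i| ^ 2) * ∑ i, ‖L (EuclideanSpace.single i (1:ℝ))‖ ^ 2) :=
              Real.sqrt_le_sqrt this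
          _ = _ := Real.sqrt_mul h1 _
    _ = ‖w‖ * Real.sqrt (∑ i, ‖L (EuclideanSpace.single i (1:ℝ))‖ ^ 2) := by
        congr 1
        rw [EuclideanSpace.norm_eq]
        simp [Real.norm_eq_abs, sq_abs]

lemma fderiv_apply_le_gradNorm (v : E3 → ℂ) (x : E3) (w : E3) :
    ‖fderiv ℝ v x w‖ ≤ ‖w‖ * gradNorm v x := clm_apply_le _ w
lemma gradNorm_measurable (v : E3 → ℂ) : Measurable (gradNorm v) := by
  apply Measurable.comp Real.continuous_sqrt.measurable
  apply Finset.measurable_sum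
  intro i _
  have h1 : Measurable (fun x => fderiv ℝ v x (EuclideanSpace.single i (1:ℝ))) := by
    exact ((ContinuousLinearMap.apply ℝ ℂ
      (EuclideanSpace.single i (1:ℝ))).continuous.measurable).comp (measurable_fderiv ℝ v)
  exact (h1.norm).pow_const 2

lemma gradNorm_continuous {v : E3 → ℂ} (hv : ContDiff ℝ (⊤ : ℕ∞) v) : Continuous (gradNorm v) := by
  apply Real.continuous_sqrt.comp
  apply continuous_finset_sum
  intro i _
  have h1 : Continuous (fun x => fderiv ℝ v x (EuclideanSpace.single i (1:ℝ))) := by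
    exact (hv.continuous_fderiv (by simp)).clm_apply continuous_const
  exact (h1.norm).pow 2

section slice

variable {u : ℝ × E3 → ℂ}

lemma slice_contDiff (hu : ContDiff ℝ (⊤ : ℕ∞) u) (t : ℝ) :
    ContDiff ℝ (⊤ : ℕ∞) (fun y : E3 => u (t, y)) :=
  hu.comp (contDiff_const.prodMk contDiff_id)

lemma slice_hasCompactSupport (hu : HasCompactSupport u) (t : ℝ) :
    HasCompactSupport (fun y : E3 => u (t, y)) := by
  apply HasCompactSupport.intro (K := Prod.mk t ⁻¹' tsupport u)
  · apply IsCompact.of_isClosed_subset (hu.image continuous_snd)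
    · exact (isClosed_tsupport u).preimage (Continuous.prodMk_right t)
    · intro y hy
      exact ⟨(t, y), hy, rfl⟩
  · intro y hy
    exact image_eq_zero_of_notMem_tsupport hy

lemma slice_fderiv (hu : ContDiff ℝ (⊤ : ℕ∞) u) (t : ℝ) (x : E3) :
    fderiv ℝ (fun y : E3 => u (t, y)) x =
      (fderiv ℝ u (t, x)).comp (ContinuousLinearMap.inr ℝ ℝ E3) := by
  have h1 : HasFDerivAt u (fderiv ℝ u (t, x)) (t, x) :=
    (hu.differentiable (by simp) (t, x)).hasFDerivAt
  have h2 : HasFDerivAt (fun y : E3 => (t, y)) (ContinuousLinearMap.inr ℝ ℝ E3) x :=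
    hasFDerivAt_prodMk_right t x
  exact (h1.comp x h2).fderiv

lemma slice_gradNorm_eq (hu : ContDiff ℝ (⊤ : ℕ∞) u) (t : ℝ) (x : E3) :
    gradNorm (fun y : E3 => u (t, y)) x =
      Real.sqrt (∑ i : Fin 3,
        ‖fderiv ℝ u (t, x) ((0 : ℝ), EuclideanSpace.single i (1:ℝ))‖ ^ 2) := by
  unfold gradNorm
  rw [slice_fderiv hu]
  rfl

lemma slice_gradNorm_continuous (hu : ContDiff ℝ (⊤ : ℕ∞) u) :
    Continuous (fun p : ℝ × E3 => gradNorm (fun y : E3 => u (p.1, y)) p.2) := by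
  have : (fun p : ℝ × E3 => gradNorm (fun y : E3 => u (p.1, y)) p.2) =
      fun p : ℝ × E3 => Real.sqrt (∑ i : Fin 3,
        ‖fderiv ℝ u p ((0 : ℝ), EuclideanSpace.single i (1:ℝ))‖ ^ 2) := by
    funext p
    exact slice_gradNorm_eq hu p.1 p.2
  rw [this]
  apply Real.continuous_sqrt.comp
  apply continuous_finset_sum
  intro i _
  exact (((hu.continuous_fderiv (by simp)).clm_apply continuous_const).norm).pow 2

lemma slice_gradNorm_le (hu : ContDiff ℝ (⊤ : ℕ∞) u) (t : ℝ) (x : E3) :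
    gradNorm (fun y : E3 => u (t, y)) x ≤ Real.sqrt 3 * ‖fderiv ℝ u (t, x)‖ := by
  rw [slice_gradNorm_eq hu]
  have h1 : ∀ i : Fin 3,
      ‖fderiv ℝ u (t, x) ((0 : ℝ), EuclideanSpace.single i (1:ℝ))‖ ≤ ‖fderiv ℝ u (t, x)‖ := by
    intro i
    calc ‖fderiv ℝ u (t, x) ((0 : ℝ), EuclideanSpace.single i (1:ℝ))‖
        ≤ ‖fderiv ℝ u (t, x)‖ * ‖((0 : ℝ), EuclideanSpace.single i (1:ℝ))‖ :=
          ContinuousLinearMap.le_opNorm _ _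
      _ = ‖fderiv ℝ u (t, x)‖ := by
          rw [Prod.norm_def]
          simp [EuclideanSpace.norm_single]
  calc Real.sqrt (∑ i : Fin 3, ‖fderiv ℝ u (t, x) ((0:ℝ), EuclideanSpace.single i (1:ℝ))‖ ^ 2)
      ≤ Real.sqrt (∑ _i : Fin 3, ‖fderiv ℝ u (t, x)‖ ^ 2) := by
        apply Real.sqrt_le_sqrt
        apply Finset.sum_le_sum
        intro i _
        exact pow_le_pow_left₀ (norm_nonneg _) (h1 i) 2
    _ = Real.sqrt 3 * ‖fderiv ℝ u (t, x)‖ := by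
        rw [Finset.sum_const]
        simp only [Finset.card_univ, Fintype.card_fin, nsmul_eq_mul]
        push_cast
        rw [Real.sqrt_mul (by norm_num : (0:ℝ) ≤ 3), Real.sqrt_sq (norm_nonneg _)]

lemma slice_gradNorm_zero (t : ℝ) (x : E3)
    (h : fderiv ℝ u (t, x) = 0) (hu : ContDiff ℝ (⊤ : ℕ∞) u) :
    gradNorm (fun y : E3 => u (t, y)) x = 0 := by
  rw [slice_gradNorm_eq hu, h]
  simp

end slice
set_option maxHeartbeats 1000000

section pointwise

open RealInnerProductSpace

lemma e3_sqrt_sum (x : E3) : Real.sqrt (∑ i, (x i) ^ 2) = ‖x‖ := by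
  rw [EuclideanSpace.norm_eq]
  congr 1
  refine Finset.sum_congr rfl fun i _ => ?_
  rw [Real.norm_eq_abs, sq_abs]

lemma inner_self_rpow (x : E3) (hx : x ≠ 0) :
    ⟪x, x⟫ ^ (-(1/2) - 1 : ℝ) = (‖x‖⁻¹) ^ 3 := by
  have h0 : (0:ℝ) < ‖x‖ := norm_pos_iff.2 hx
  rw [real_inner_self_eq_norm_sq]
  have : (‖x‖ ^ 2 : ℝ) = ‖x‖ ^ (2:ℝ) := by
    rw [← Real.rpow_natCast ‖x‖ 2]; norm_num
  rw [this, ← Real.rpow_mul (norm_nonneg x)]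
  have : ((2:ℝ) * (-(1/2) - 1)) = ((-3 : ℤ) : ℝ) := by norm_num
  rw [this, Real.rpow_intCast, zpow_neg, inv_pow]
  norm_cast

lemma norm_inv_eq_rpow (y : E3) : ‖y‖⁻¹ = ⟪y, y⟫ ^ (-(1/2) : ℝ) := by
  rw [real_inner_self_eq_norm_sq]
  have : (‖y‖ ^ 2 : ℝ) = ‖y‖ ^ (2:ℝ) := by
    rw [← Real.rpow_natCast ‖y‖ 2]; norm_num
  rw [this, ← Real.rpow_mul (norm_nonneg y)]
  have : ((2:ℝ) * (-(1/2))) = (-1 : ℝ) := by norm_num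
  rw [this, Real.rpow_neg_one]

lemma gradF_bound {v : E3 → ℂ} (hv : ContDiff ℝ (⊤ : ℕ∞) v) {x : E3} (hx : x ≠ 0) :
    gradNorm (fun y => ((‖y‖⁻¹ * ‖v y‖ ^ 2 : ℝ) : ℂ) * v y) x ≤
      (‖x‖⁻¹ * ‖v x‖) ^ 2 * ‖v x‖ +
        5 * ((‖x‖⁻¹ * ‖v x‖) * (‖v x‖ * gradNorm v x)) := by
  have hx0 : (0:ℝ) < ‖x‖ := norm_pos_iff.2 hx
  set L : E3 →L[ℝ] ℂ := fderiv ℝ v x with hL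
  have dv : HasFDerivAt v L x := (hv.differentiable (by simp) x).hasFDerivAt
  -- derivative of y ↦ ⟪y,y⟫
  have hinner : HasFDerivAt (fun y : E3 => ⟪y, y⟫)
      ((fderivInnerCLM ℝ (x, x)).comp
        ((ContinuousLinearMap.id ℝ E3).prod (ContinuousLinearMap.id ℝ E3))) x := by
    exact (hasFDerivAt_id x).inner ℝ (hasFDerivAt_id x)
  set Din := (fderivInnerCLM (𝕜 := ℝ) (E := E3) (x, x)).comp
      ((ContinuousLinearMap.id ℝ E3).prod (ContinuousLinearMap.id ℝ E3)) with hDin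
  have hDin_apply : ∀ w, Din w = ⟪x, w⟫ + ⟪w, x⟫ := by
    intro w
    simp [hDin, fderivInnerCLM_apply]
  -- derivative of y ↦ ‖y‖⁻¹
  have hip : (0:ℝ) < ⟪x, x⟫ := by
    rw [real_inner_self_eq_norm_sq]
    exact pow_pos hx0 2
  have hr : HasDerivAt (fun s : ℝ => s ^ (-(1/2) : ℝ))
      ((-(1/2)) * ⟪x, x⟫ ^ ((-(1/2)) - 1 : ℝ)) ⟪x, x⟫ :=
    Real.hasDerivAt_rpow_const (Or.inl (ne_of_gt hip))
  set D1 : E3 →L[ℝ] ℝ := ((-(1/2)) * ⟪x, x⟫ ^ ((-(1/2)) - 1 : ℝ)) • Din with hD1def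
  have N1 : HasFDerivAt (fun y : E3 => ‖y‖⁻¹) D1 x := by
    have h := HasDerivAt.comp_hasFDerivAt (f := fun y : E3 => ⟪y, y⟫) x hr hinner
    have heq : (fun y : E3 => ⟪y, y⟫ ^ (-(1/2) : ℝ)) = fun y : E3 => ‖y‖⁻¹ := by
      funext y
      rw [norm_inv_eq_rpow]
    simp only [Function.comp_def] at h
    rw [heq] at h
    exact h
  have hD1_apply : ∀ i : Fin 3,
      |D1 (EuclideanSpace.single i (1:ℝ))| ≤ (‖x‖⁻¹) ^ 3 * |x i| := by
    intro i
    have h1 : ⟪x, EuclideanSpace.single i (1:ℝ)⟫ = x i := by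
      rw [EuclideanSpace.inner_single_right]
      simp
    have h2 : ⟪EuclideanSpace.single i (1:ℝ), x⟫ = x i := by
      rw [EuclideanSpace.inner_single_left]
      simp
    have : D1 (EuclideanSpace.single i (1:ℝ)) =
        ((-(1/2)) * ⟪x, x⟫ ^ ((-(1/2)) - 1 : ℝ)) * (x i + x i) := by
      rw [hD1def]
      simp only [ContinuousLinearMap.smul_apply, smul_eq_mul]
      rw [hDin_apply, h1, h2]
    rw [this, inner_self_rpow x hx]
    have hc : (0:ℝ) ≤ (‖x‖⁻¹) ^ 3 := by positivity
    rw [abs_mul, abs_mul]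
    have : |x i + x i| = 2 * |x i| := by
      rw [← two_mul, abs_mul]; norm_num
    rw [this, abs_of_nonneg hc]
    have : |(-(1/2) : ℝ)| = 1/2 := by norm_num
    rw [this]
    ring_nf
    nlinarith [abs_nonneg (x i), hc]
  -- derivative of y ↦ ‖v y‖^2
  have qre : HasFDerivAt (fun y => (v y).re) (Complex.reCLM.comp L) x :=
    (Complex.reCLM.hasFDerivAt).comp x dv
  have qim : HasFDerivAt (fun y => (v y).im) (Complex.imCLM.comp L) x :=
    (Complex.imCLM.hasFDerivAt).comp x dv
  have Nq0 : HasFDerivAt (fun y => (v y).re * (v y).re + (v y).im * (v y).im)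
      (((v x).re • (Complex.reCLM.comp L) + (v x).re • (Complex.reCLM.comp L)) +
        ((v x).im • (Complex.imCLM.comp L) + (v x).im • (Complex.imCLM.comp L))) x :=
    (qre.mul qre).add (qim.mul qim)
  set Dq := ((v x).re • (Complex.reCLM.comp L) + (v x).re • (Complex.reCLM.comp L)) +
        ((v x).im • (Complex.imCLM.comp L) + (v x).im • (Complex.imCLM.comp L)) with hDqdef
  have Nq : HasFDerivAt (fun y => ‖v y‖ ^ 2) Dq x := by
    have heq : (fun y => (v y).re * (v y).re + (v y).im * (v y).im)
        = fun y => ‖v y‖ ^ 2 := by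
      funext y
      rw [Complex.sq_norm, Complex.normSq_apply]
    rw [heq] at Nq0
    exact Nq0
  have hDq_apply : ∀ w, |Dq w| ≤ 4 * ‖v x‖ * ‖L w‖ := by
    intro w
    have hre : |(v x).re| ≤ ‖v x‖ := Complex.abs_re_le_norm _
    have him : |(v x).im| ≤ ‖v x‖ := Complex.abs_im_le_norm _
    have hre2 : |(L w).re| ≤ ‖L w‖ := Complex.abs_re_le_norm _
    have him2 : |(L w).im| ≤ ‖L w‖ := Complex.abs_im_le_norm _
    have : Dq w = 2 * ((v x).re * (L w).re) + 2 * ((v x).im * (L w).im) := by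
      rw [hDqdef]
      simp only [ContinuousLinearMap.add_apply, ContinuousLinearMap.smul_apply,
        ContinuousLinearMap.comp_apply, Complex.reCLM_apply, Complex.imCLM_apply,
        smul_eq_mul]
      ring
    rw [this]
    calc |2 * ((v x).re * (L w).re) + 2 * ((v x).im * (L w).im)|
        ≤ |2 * ((v x).re * (L w).re)| + |2 * ((v x).im * (L w).im)| := abs_add_le _ _
      _ = 2 * (|(v x).re| * |(L w).re|) + 2 * (|(v x).im| * |(L w).im|) := by
          rw [abs_mul, abs_mul, abs_mul, abs_mul]
          norm_num
      _ ≤ 2 * (‖v x‖ * ‖L w‖) + 2 * (‖v x‖ * ‖L w‖) := by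
          have h1 : |(v x).re| * |(L w).re| ≤ ‖v x‖ * ‖L w‖ :=
            mul_le_mul hre hre2 (abs_nonneg _) (norm_nonneg _)
          have h2 : |(v x).im| * |(L w).im| ≤ ‖v x‖ * ‖L w‖ :=
            mul_le_mul him him2 (abs_nonneg _) (norm_nonneg _)
          linarith
      _ = 4 * ‖v x‖ * ‖L w‖ := by ring
  -- derivative of φ = ‖y‖⁻¹ * ‖v y‖^2
  have Nφ : HasFDerivAt (fun y : E3 => ‖y‖⁻¹ * ‖v y‖ ^ 2)
      (‖x‖⁻¹ • Dq + (‖v x‖ ^ 2) • D1) x := N1.mul Nq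
  -- derivative of F
  set DF : E3 →L[ℝ] ℂ := (‖x‖⁻¹ * ‖v x‖ ^ 2) • L +
      (‖x‖⁻¹ • Dq + (‖v x‖ ^ 2) • D1).smulRight (v x) with hDFdef
  have NF : HasFDerivAt (fun y => ((‖y‖⁻¹ * ‖v y‖ ^ 2 : ℝ) : ℂ) * v y) DF x := by
    have h := Nφ.smul dv
    have heq : (fun y : E3 => (‖y‖⁻¹ * ‖v y‖ ^ 2) • v y)
        = fun y => ((‖y‖⁻¹ * ‖v y‖ ^ 2 : ℝ) : ℂ) * v y := by
      funext y
      rw [Complex.real_smul]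
    rw [← heq]
    exact h
  have hfd : fderiv ℝ (fun y => ((‖y‖⁻¹ * ‖v y‖ ^ 2 : ℝ) : ℂ) * v y) x = DF := NF.fderiv
  -- bound each component
  have hcomp : ∀ i : Fin 3, ‖DF (EuclideanSpace.single i (1:ℝ))‖ ≤
      ((‖x‖⁻¹) ^ 3 * ‖v x‖ ^ 3) * |x i| +
        (5 * ‖x‖⁻¹ * ‖v x‖ ^ 2) * ‖L (EuclideanSpace.single i (1:ℝ))‖ := by
    intro i
    set w := EuclideanSpace.single i (1:ℝ)
    have h1 : ‖DF w‖ ≤ (‖x‖⁻¹ * ‖v x‖ ^ 2) * ‖L w‖ +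
        |‖x‖⁻¹ * Dq w + ‖v x‖ ^ 2 * D1 w| * ‖v x‖ := by
      rw [hDFdef]
      simp only [ContinuousLinearMap.add_apply, ContinuousLinearMap.smul_apply,
        ContinuousLinearMap.smulRight_apply, smul_eq_mul]
      calc ‖(‖x‖⁻¹ * ‖v x‖ ^ 2) • L w + (‖x‖⁻¹ * Dq w + ‖v x‖ ^ 2 * D1 w) • v x‖
          ≤ ‖(‖x‖⁻¹ * ‖v x‖ ^ 2) • L w‖ + ‖(‖x‖⁻¹ * Dq w + ‖v x‖ ^ 2 * D1 w) • v x‖ :=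
            norm_add_le _ _
        _ ≤ (‖x‖⁻¹ * ‖v x‖ ^ 2) * ‖L w‖ + |‖x‖⁻¹ * Dq w + ‖v x‖ ^ 2 * D1 w| * ‖v x‖ := by
            rw [norm_smul, norm_smul, Real.norm_eq_abs, Real.norm_eq_abs,
              abs_of_nonneg (by positivity : (0:ℝ) ≤ ‖x‖⁻¹ * ‖v x‖ ^ 2)]
    have h2 : |‖x‖⁻¹ * Dq w + ‖v x‖ ^ 2 * D1 w| ≤
        ‖x‖⁻¹ * (4 * ‖v x‖ * ‖L w‖) + ‖v x‖ ^ 2 * ((‖x‖⁻¹) ^ 3 * |x i|) := by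
      calc |‖x‖⁻¹ * Dq w + ‖v x‖ ^ 2 * D1 w|
          ≤ |‖x‖⁻¹ * Dq w| + |‖v x‖ ^ 2 * D1 w| := abs_add_le _ _
        _ = ‖x‖⁻¹ * |Dq w| + ‖v x‖ ^ 2 * |D1 w| := by
            rw [abs_mul, abs_mul, abs_of_nonneg (by positivity : (0:ℝ) ≤ ‖x‖⁻¹),
              abs_of_nonneg (sq_nonneg ‖v x‖)]
        _ ≤ _ := by
            have := hDq_apply w
            have := hD1_apply i
            have h3 : (0:ℝ) ≤ ‖x‖⁻¹ := by positivity
            have h4 : (0:ℝ) ≤ ‖v x‖ ^ 2 := sq_nonneg _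
            apply add_le_add
            · exact mul_le_mul_of_nonneg_left (hDq_apply w) h3
            · exact mul_le_mul_of_nonneg_left (hD1_apply i) h4
    calc ‖DF w‖ ≤ (‖x‖⁻¹ * ‖v x‖ ^ 2) * ‖L w‖ +
        (‖x‖⁻¹ * (4 * ‖v x‖ * ‖L w‖) + ‖v x‖ ^ 2 * ((‖x‖⁻¹) ^ 3 * |x i|)) * ‖v x‖ := by
          refine h1.trans (add_le_add_right ?_ _)
          exact mul_le_mul_of_nonneg_right h2 (norm_nonneg _)
      _ = ((‖x‖⁻¹) ^ 3 * ‖v x‖ ^ 3) * |x i| + (5 * ‖x‖⁻¹ * ‖v x‖ ^ 2) * ‖L w‖ := by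
          ring
  -- assemble via Minkowski in ℝ³
  have key : gradNorm (fun y => ((‖y‖⁻¹ * ‖v y‖ ^ 2 : ℝ) : ℂ) * v y) x ≤
      ((‖x‖⁻¹) ^ 3 * ‖v x‖ ^ 3) * ‖x‖ + (5 * ‖x‖⁻¹ * ‖v x‖ ^ 2) * gradNorm v x := by
    unfold gradNorm
    rw [hfd]
    have step1 : Real.sqrt (∑ i, ‖DF (EuclideanSpace.single i (1:ℝ))‖ ^ 2) ≤
        Real.sqrt (∑ i, (((‖x‖⁻¹) ^ 3 * ‖v x‖ ^ 3) * |x i| +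
          (5 * ‖x‖⁻¹ * ‖v x‖ ^ 2) * ‖L (EuclideanSpace.single i (1:ℝ))‖) ^ 2) := by
      apply sqrt_sum_mono
      intro i
      rw [abs_of_nonneg (norm_nonneg _)]
      exact hcomp i
    refine step1.trans ?_
    refine (sqrt_sum_sq_add_le _ _).trans ?_
    apply add_le_add
    · rw [sqrt_sum_sq_const_mul _ (by positivity)]
      apply le_of_eq
      congr 1
      rw [← e3_sqrt_sum x]
      congr 1
      refine Finset.sum_congr rfl fun i _ => ?_
      rw [sq_abs]
    · rw [sqrt_sum_sq_const_mul _ (by positivity)]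
  refine key.trans (le_of_eq ?_)
  have : (‖x‖⁻¹) ^ 3 * ‖v x‖ ^ 3 * ‖x‖ = (‖x‖⁻¹ * ‖v x‖) ^ 2 * ‖v x‖ := by
    have hne : ‖x‖ ≠ 0 := ne_of_gt hx0
    field_simp
  rw [this]
  ring

end pointwise
section ftc

lemma ftc_bound {v : E3 → ℂ} (hv : ContDiff ℝ (⊤ : ℕ∞) v) (hc : HasCompactSupport v)
    {x : E3} (hx : x ≠ 0) :
    ‖x‖⁻¹ * ‖v x‖ ≤ ∫ s in Set.Ioi (1:ℝ), gradNorm v (s • x) := by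
  have hx0 : (0:ℝ) < ‖x‖ := norm_pos_iff.2 hx
  obtain ⟨r, hr⟩ := hc.isBounded.subset_closedBall 0
  set R := max r 0 with hRdef
  have hR0 : 0 ≤ R := le_max_right _ _
  have hsupp : tsupport v ⊆ Metric.closedBall 0 R :=
    hr.trans (Metric.closedBall_subset_closedBall (le_max_left _ _))
  have hvanish : ∀ y : E3, R < ‖y‖ → fderiv ℝ v y = 0 := by
    intro y hy
    by_contra h
    have : y ∈ tsupport v := support_fderiv_subset ℝ (Function.mem_support.2 h)
    have := hsupp this
    rw [Metric.mem_closedBall, dist_zero_right] at this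
    linarith
  set ψ : ℝ → ℝ := fun s => gradNorm v (s • x) with hψdef
  have ψcont : Continuous ψ :=
    (gradNorm_continuous hv).comp (continuous_id.smul continuous_const)
  have hψ0 : ∀ s : ℝ, R / ‖x‖ < |s| → ψ s = 0 := by
    intro s hs
    have hnorm : ‖s • x‖ = |s| * ‖x‖ := by
      rw [norm_smul, Real.norm_eq_abs]
    have : R < ‖s • x‖ := by
      rw [hnorm]
      calc R = (R / ‖x‖) * ‖x‖ := by field_simp
        _ < |s| * ‖x‖ := by
            apply mul_lt_mul_of_pos_right hs hx0
    have h0 : fderiv ℝ v (s • x) = 0 := hvanish _ this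
    show gradNorm v (s • x) = 0
    unfold gradNorm
    rw [h0]
    simp
  have hψc : HasCompactSupport ψ := by
    apply HasCompactSupport.intro (isCompact_Icc (a := -(R / ‖x‖ + 1)) (b := R / ‖x‖ + 1))
    intro s hs
    apply hψ0
    rw [Set.mem_Icc] at hs
    push_neg at hs
    rcases le_or_gt (-(R / ‖x‖ + 1)) s with h | h
    · have := hs h
      calc R / ‖x‖ < R / ‖x‖ + 1 := by linarith
        _ < |s| := lt_of_lt_of_le this (le_abs_self s)
    · calc R / ‖x‖ < R / ‖x‖ + 1 := by linarith
        _ < -s := by linarith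
        _ ≤ |s| := neg_le_abs s
  have hinteg : IntegrableOn ψ (Set.Ioi (1:ℝ)) volume :=
    (ψcont.integrable_of_hasCompactSupport hψc).integrableOn
  set h' : ℝ → ℂ := fun s => fderiv ℝ v (s • x) x with hh'def
  have h'cont : Continuous h' := by
    exact ((hv.continuous_fderiv (by simp)).comp
      (continuous_id.smul continuous_const)).clm_apply continuous_const
  have hder : ∀ s : ℝ, HasDerivAt (fun τ : ℝ => v (τ • x)) (h' s) s := by
    intro s
    have h1 : HasDerivAt (fun τ : ℝ => τ • x) ((1:ℝ) • x) s :=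
      (hasDerivAt_id s).smul_const x
    have h2 : HasFDerivAt v (fderiv ℝ v (s • x)) (s • x) :=
      (hv.differentiable (by simp) (s • x)).hasFDerivAt
    have := h2.comp_hasDerivAt s h1
    rw [one_smul] at this
    exact this
  set T := R / ‖x‖ + 2 with hTdef
  have hT1 : (1:ℝ) ≤ T := by
    have : 0 ≤ R / ‖x‖ := div_nonneg hR0 hx0.le
    simp only [hTdef]; linarith
  have hvT : v (T • x) = 0 := by
    apply image_eq_zero_of_notMem_tsupport
    intro hmem
    have := hsupp hmem
    rw [Metric.mem_closedBall, dist_zero_right] at this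
    rw [norm_smul, Real.norm_eq_abs] at this
    have hTpos : 0 < T := lt_of_lt_of_le one_pos hT1
    rw [abs_of_pos hTpos] at this
    have : (R / ‖x‖ + 2) * ‖x‖ ≤ R := this
    rw [add_mul, div_mul_cancel₀ _ (ne_of_gt hx0)] at this
    linarith
  have hFTC : ∫ s in (1:ℝ)..T, h' s = v (T • x) - v ((1:ℝ) • x) := by
    have := intervalIntegral.integral_eq_sub_of_hasDerivAt (a := (1:ℝ)) (b := T)
      (f := fun τ : ℝ => v (τ • x)) (f' := h') (fun s _ => hder s)
      (h'cont.intervalIntegrable 1 T)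
    simpa using this
  have key : ‖v x‖ ≤ ‖x‖ * ∫ s in Set.Ioi (1:ℝ), ψ s := by
    have h1 : ‖v x‖ = ‖∫ s in (1:ℝ)..T, h' s‖ := by
      rw [hFTC, hvT, one_smul, zero_sub, norm_neg]
    rw [h1]
    calc ‖∫ s in (1:ℝ)..T, h' s‖ ≤ ∫ s in (1:ℝ)..T, ‖h' s‖ :=
          intervalIntegral.norm_integral_le_integral_norm hT1
      _ ≤ ∫ s in (1:ℝ)..T, ‖x‖ * ψ s := by
          apply intervalIntegral.integral_mono_on hT1
          · exact (h'cont.norm.intervalIntegrable 1 T)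
          · exact ((continuous_const.mul ψcont).intervalIntegrable 1 T)
          · intro s _
            exact fderiv_apply_le_gradNorm v (s • x) x
      _ = ‖x‖ * ∫ s in (1:ℝ)..T, ψ s := by
          rw [intervalIntegral.integral_const_mul]
      _ ≤ ‖x‖ * ∫ s in Set.Ioi (1:ℝ), ψ s := by
          apply mul_le_mul_of_nonneg_left _ hx0.le
          rw [intervalIntegral.integral_of_le hT1]
          apply setIntegral_mono_set hinteg
          · exact Filter.Eventually.of_forall fun s => gradNorm_nonneg _ _
          · exact HasSubset.Subset.eventuallyLE Set.Ioc_subset_Ioi_self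
  calc ‖x‖⁻¹ * ‖v x‖ ≤ ‖x‖⁻¹ * (‖x‖ * ∫ s in Set.Ioi (1:ℝ), ψ s) :=
        mul_le_mul_of_nonneg_left key (by positivity)
    _ = ∫ s in Set.Ioi (1:ℝ), ψ s := by
        rw [← mul_assoc, inv_mul_cancel₀ (ne_of_gt hx0), one_mul]

end ftc
section ennreal_helpers

open ENNReal

lemma aem_rpow {α : Type*} [MeasurableSpace α] {μ : Measure α} {f : α → ℝ≥0∞}
    (hf : AEMeasurable f μ) (c : ℝ) : AEMeasurable (fun a => f a ^ c) μ :=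
  ENNReal.continuous_rpow_const.measurable.comp_aemeasurable hf

lemma lint_holder_pair {α : Type*} [MeasurableSpace α] (μ : Measure α) {f g : α → ℝ≥0∞}
    (hf : AEMeasurable f μ) (hg : AEMeasurable g μ) {p q : ℝ} (hpq : p.HolderConjugate q) :
    ∫⁻ a, f a * g a ∂μ ≤ (∫⁻ a, f a ^ p ∂μ) ^ (1/p) * (∫⁻ a, g a ^ q ∂μ) ^ (1/q) := by
  have := ENNReal.lintegral_mul_le_Lp_mul_Lq μ hpq hf hg
  simpa [Pi.mul_apply] using this

lemma lint_rpow_Ioi_lt_top {c : ℝ} (hc : c < -1) :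
    ∫⁻ s in Set.Ioi (1:ℝ), ENNReal.ofReal s ^ c < ⊤ := by
  have heq : ∫⁻ s in Set.Ioi (1:ℝ), ENNReal.ofReal s ^ c
      = ∫⁻ s in Set.Ioi (1:ℝ), ENNReal.ofReal (s ^ c) := by
    apply setLIntegral_congr_fun measurableSet_Ioi
    intro s hs
    beta_reduce
    rw [← ENNReal.ofReal_rpow_of_pos (lt_trans one_pos hs)]
  rw [heq, ← ofReal_integral_eq_lintegral_ofReal]
  · exact ENNReal.ofReal_lt_top
  · exact integrableOn_Ioi_rpow_of_lt hc one_pos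
  · apply (ae_restrict_iff' measurableSet_Ioi).2
    exact Filter.Eventually.of_forall fun s hs => Real.rpow_nonneg (le_of_lt (lt_trans one_pos hs)) c

noncomputable def K1 : ℝ≥0∞ := ∫⁻ s in Set.Ioi (1:ℝ), ENNReal.ofReal s ^ (-(21/19) : ℝ)
noncomputable def K2 : ℝ≥0∞ := ∫⁻ s in Set.Ioi (1:ℝ), ENNReal.ofReal s ^ (-(12/11) : ℝ)

lemma K1_ne_top : K1 ≠ ⊤ := (lint_rpow_Ioi_lt_top (by norm_num)).ne
lemma K2_ne_top : K2 ≠ ⊤ := (lint_rpow_Ioi_lt_top (by norm_num)).ne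

/-- Hardy-type constant. -/
noncomputable def cH : ℝ≥0∞ := (K1 ^ ((19:ℝ)/11) * K2) ^ ((11:ℝ)/30)

lemma cH_ne_top : cH ≠ ⊤ := by
  apply ENNReal.rpow_ne_top_of_nonneg (by norm_num)
  exact ENNReal.mul_ne_top (ENNReal.rpow_ne_top_of_nonneg (by norm_num) K1_ne_top) K2_ne_top

lemma lint_holder_triple {α : Type*} [MeasurableSpace α] (μ : Measure α) {f g h : α → ℝ≥0∞}
    (hf : AEMeasurable f μ) (hg : AEMeasurable g μ) (hh : AEMeasurable h μ) :
    (∫⁻ a, (f a * g a * h a) ^ ((6:ℝ)/5) ∂μ) ^ ((5:ℝ)/6) ≤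
      (∫⁻ a, f a ^ (10:ℝ) ∂μ) ^ ((1:ℝ)/10) *
        ((∫⁻ a, g a ^ ((30:ℝ)/11) ∂μ) ^ ((11:ℝ)/30) *
          (∫⁻ a, h a ^ ((30:ℝ)/11) ∂μ) ^ ((11:ℝ)/30)) := by
  set A := ∫⁻ a, f a ^ (10:ℝ) ∂μ with hA
  set B := ∫⁻ a, g a ^ ((30:ℝ)/11) ∂μ with hB
  set C := ∫⁻ a, h a ^ ((30:ℝ)/11) ∂μ with hC
  -- step 1 : Hölder with exponents 25/3, 25/22
  have step1 : ∫⁻ a, (f a * g a * h a) ^ ((6:ℝ)/5) ∂μ ≤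
      A ^ ((3:ℝ)/25) * (∫⁻ a, (g a * h a) ^ ((15:ℝ)/11) ∂μ) ^ ((22:ℝ)/25) := by
    have heq : ∀ a, (f a * g a * h a) ^ ((6:ℝ)/5)
        = (f a ^ ((6:ℝ)/5)) * ((g a * h a) ^ ((6:ℝ)/5)) := by
      intro a
      rw [mul_assoc, ENNReal.mul_rpow_of_nonneg _ _ (by norm_num : (0:ℝ) ≤ 6/5)]
    have hconj : ((25:ℝ)/3).HolderConjugate ((25:ℝ)/22) := by
      constructor <;> norm_num
    calc ∫⁻ a, (f a * g a * h a) ^ ((6:ℝ)/5) ∂μ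
        = ∫⁻ a, (f a ^ ((6:ℝ)/5)) * ((g a * h a) ^ ((6:ℝ)/5)) ∂μ := by
          exact lintegral_congr heq
      _ ≤ (∫⁻ a, (f a ^ ((6:ℝ)/5)) ^ ((25:ℝ)/3) ∂μ) ^ (1/((25:ℝ)/3)) *
            (∫⁻ a, ((g a * h a) ^ ((6:ℝ)/5)) ^ ((25:ℝ)/22) ∂μ) ^ (1/((25:ℝ)/22)) :=
          lint_holder_pair μ (aem_rpow hf _) (aem_rpow (hg.mul hh) _) hconj
      _ = A ^ ((3:ℝ)/25) * (∫⁻ a, (g a * h a) ^ ((15:ℝ)/11) ∂μ) ^ ((22:ℝ)/25) := by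
          congr 1
          · congr 1
            · apply lintegral_congr
              intro a
              rw [← ENNReal.rpow_mul]
              norm_num
            · norm_num
          · congr 1
            · apply lintegral_congr
              intro a
              rw [← ENNReal.rpow_mul]
              norm_num
            · norm_num
  -- step 2 : Hölder with exponents 2, 2 on g*h
  have step2 : ∫⁻ a, (g a * h a) ^ ((15:ℝ)/11) ∂μ ≤ B ^ ((1:ℝ)/2) * C ^ ((1:ℝ)/2) := by
    have hconj : ((2:ℝ)).HolderConjugate 2 := by constructor <;> norm_num
    calc ∫⁻ a, (g a * h a) ^ ((15:ℝ)/11) ∂μ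
        = ∫⁻ a, (g a ^ ((15:ℝ)/11)) * (h a ^ ((15:ℝ)/11)) ∂μ := by
          apply lintegral_congr
          intro a
          rw [ENNReal.mul_rpow_of_nonneg _ _ (by norm_num : (0:ℝ) ≤ 15/11)]
      _ ≤ (∫⁻ a, (g a ^ ((15:ℝ)/11)) ^ (2:ℝ) ∂μ) ^ (1/(2:ℝ)) *
            (∫⁻ a, (h a ^ ((15:ℝ)/11)) ^ (2:ℝ) ∂μ) ^ (1/(2:ℝ)) :=
          lint_holder_pair μ (aem_rpow hg _) (aem_rpow hh _) hconj
      _ = B ^ ((1:ℝ)/2) * C ^ ((1:ℝ)/2) := by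
          congr 2 <;>
          · apply lintegral_congr
            intro a
            rw [← ENNReal.rpow_mul]
            norm_num
  -- combine
  calc (∫⁻ a, (f a * g a * h a) ^ ((6:ℝ)/5) ∂μ) ^ ((5:ℝ)/6)
      ≤ (A ^ ((3:ℝ)/25) * (B ^ ((1:ℝ)/2) * C ^ ((1:ℝ)/2)) ^ ((22:ℝ)/25)) ^ ((5:ℝ)/6) := by
        apply ENNReal.rpow_le_rpow _ (by norm_num : (0:ℝ) ≤ 5/6)
        refine step1.trans ?_
        exact mul_le_mul_right (ENNReal.rpow_le_rpow step2 (by norm_num)) _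
    _ = A ^ ((1:ℝ)/10) * (B ^ ((11:ℝ)/30) * C ^ ((11:ℝ)/30)) := by
        rw [ENNReal.mul_rpow_of_nonneg _ _ (by norm_num : (0:ℝ) ≤ 5/6)]
        rw [ENNReal.mul_rpow_of_nonneg _ _ (by norm_num : (0:ℝ) ≤ 22/25)]
        rw [ENNReal.mul_rpow_of_nonneg _ _ (by norm_num : (0:ℝ) ≤ 5/6)]
        rw [← ENNReal.rpow_mul, ← ENNReal.rpow_mul, ← ENNReal.rpow_mul,
          ← ENNReal.rpow_mul, ← ENNReal.rpow_mul]
        norm_num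

end ennreal_helpers
section hardy

open ENNReal

lemma psi_hasCompactSupport {v : E3 → ℂ} (hv : ContDiff ℝ (⊤ : ℕ∞) v) (hc : HasCompactSupport v)
    {x : E3} (hx : x ≠ 0) :
    HasCompactSupport (fun s : ℝ => gradNorm v (s • x)) := by
  have hx0 : (0:ℝ) < ‖x‖ := norm_pos_iff.2 hx
  obtain ⟨r, hr⟩ := hc.isBounded.subset_closedBall 0
  set R := max r 0 with hRdef
  have hR0 : 0 ≤ R := le_max_right _ _
  have hsupp : tsupport v ⊆ Metric.closedBall 0 R :=
    hr.trans (Metric.closedBall_subset_closedBall (le_max_left _ _))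
  have hvanish : ∀ y : E3, R < ‖y‖ → fderiv ℝ v y = 0 := by
    intro y hy
    by_contra h
    have h1 : y ∈ tsupport v := support_fderiv_subset ℝ (Function.mem_support.2 h)
    have h2 := hsupp h1
    rw [Metric.mem_closedBall, dist_zero_right] at h2
    linarith
  apply HasCompactSupport.intro (isCompact_Icc (a := -(R / ‖x‖ + 1)) (b := R / ‖x‖ + 1))
  intro s hs
  have habs : R / ‖x‖ < |s| := by
    rw [Set.mem_Icc] at hs
    push_neg at hs
    rcases le_or_gt (-(R / ‖x‖ + 1)) s with h | h
    · have := hs h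
      calc R / ‖x‖ < R / ‖x‖ + 1 := by linarith
        _ < |s| := lt_of_lt_of_le this (le_abs_self s)
    · calc R / ‖x‖ < R / ‖x‖ + 1 := by linarith
        _ < -s := by linarith
        _ ≤ |s| := neg_le_abs s
  have h3 : R < ‖s • x‖ := by
    rw [norm_smul, Real.norm_eq_abs]
    calc R = (R / ‖x‖) * ‖x‖ := by field_simp
      _ < |s| * ‖x‖ := mul_lt_mul_of_pos_right habs hx0
  show gradNorm v (s • x) = 0
  unfold gradNorm
  rw [hvanish _ h3]
  simp

lemma psi_integrableOn {v : E3 → ℂ} (hv : ContDiff ℝ (⊤ : ℕ∞) v) (hc : HasCompactSupport v)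
    {x : E3} (hx : x ≠ 0) :
    IntegrableOn (fun s : ℝ => gradNorm v (s • x)) (Set.Ioi (1:ℝ)) volume := by
  have ψcont : Continuous (fun s : ℝ => gradNorm v (s • x)) :=
    (gradNorm_continuous hv).comp (continuous_id.smul continuous_const)
  exact (ψcont.integrable_of_hasCompactSupport (psi_hasCompactSupport hv hc hx)).integrableOn

/-- Hardy's inequality, `L^{30/11}(ℝ³)` version, in `lintegral` form. -/
lemma hardy {v : E3 → ℂ} (hv : ContDiff ℝ (⊤ : ℕ∞) v) (hc : HasCompactSupport v) :
    ∫⁻ x : E3, ENNReal.ofReal (‖x‖⁻¹ * ‖v x‖) ^ ((30:ℝ)/11) ≤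
      K1 ^ ((19:ℝ)/11) * K2 * ∫⁻ x : E3, ENNReal.ofReal (gradNorm v x) ^ ((30:ℝ)/11) := by
  set Q := ∫⁻ x : E3, ENNReal.ofReal (gradNorm v x) ^ ((30:ℝ)/11) with hQ
  set Ψ : ℝ → E3 → ℝ≥0∞ := fun s x => ENNReal.ofReal (gradNorm v (s • x)) with hΨ
  -- pointwise FTC bound
  have haux : ∀ x : E3, x ≠ 0 →
      ENNReal.ofReal (‖x‖⁻¹ * ‖v x‖) ≤ ∫⁻ s in Set.Ioi (1:ℝ), Ψ s x := by
    intro x hx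
    have h1 := ftc_bound hv hc hx
    calc ENNReal.ofReal (‖x‖⁻¹ * ‖v x‖)
        ≤ ENNReal.ofReal (∫ s in Set.Ioi (1:ℝ), gradNorm v (s • x)) :=
          ENNReal.ofReal_le_ofReal h1
      _ = ∫⁻ s in Set.Ioi (1:ℝ), Ψ s x := by
          rw [ofReal_integral_eq_lintegral_ofReal (psi_integrableOn hv hc hx)]
          apply (ae_restrict_iff' measurableSet_Ioi).2
          exact Filter.Eventually.of_forall fun s _ => gradNorm_nonneg _ _
  -- Hölder in `s` with weight
  have hweight : ∀ x : E3,
      (∫⁻ s in Set.Ioi (1:ℝ), Ψ s x) ^ ((30:ℝ)/11) ≤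
        K1 ^ ((19:ℝ)/11) *
          ∫⁻ s in Set.Ioi (1:ℝ), ENNReal.ofReal s ^ ((21:ℝ)/11) * Ψ s x ^ ((30:ℝ)/11) := by
    intro x
    have hΨmeas : Measurable (fun s => Ψ s x) := by
      apply ENNReal.measurable_ofReal.comp
      exact ((gradNorm_continuous hv).comp (continuous_id.smul continuous_const)).measurable
    have hsm : Measurable (fun s : ℝ => ENNReal.ofReal s) :=
      ENNReal.measurable_ofReal
    have hconj : ((30:ℝ)/19).HolderConjugate ((30:ℝ)/11) := by
      constructor <;> norm_num
    have step1 : ∫⁻ s in Set.Ioi (1:ℝ), Ψ s x =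
        ∫⁻ s in Set.Ioi (1:ℝ),
          (ENNReal.ofReal s ^ (-(7/10):ℝ)) * (ENNReal.ofReal s ^ ((7/10):ℝ) * Ψ s x) := by
      apply setLIntegral_congr_fun measurableSet_Ioi
      intro s hs
      beta_reduce
      have h0 : ENNReal.ofReal s ≠ 0 := by
        simp only [ne_eq, ENNReal.ofReal_eq_zero, not_le]
        linarith [Set.mem_Ioi.1 hs]
      have htop : ENNReal.ofReal s ≠ ⊤ := ENNReal.ofReal_ne_top
      rw [← mul_assoc, ← ENNReal.rpow_add _ _ h0 htop]
      norm_num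
    have step2 := lint_holder_pair (μ := volume.restrict (Set.Ioi (1:ℝ)))
      (f := fun s : ℝ => ENNReal.ofReal s ^ (-(7/10):ℝ))
      (g := fun s : ℝ => ENNReal.ofReal s ^ ((7/10):ℝ) * Ψ s x)
      (hf := ((ENNReal.continuous_rpow_const.measurable.comp hsm).aemeasurable))
      (hg := (((ENNReal.continuous_rpow_const.measurable.comp hsm).mul hΨmeas).aemeasurable))
      (hpq := hconj)
    have heq1 : ∫⁻ s in Set.Ioi (1:ℝ), (ENNReal.ofReal s ^ (-(7/10):ℝ)) ^ ((30:ℝ)/19)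
        = K1 := by
      unfold K1
      apply lintegral_congr
      intro s
      rw [← ENNReal.rpow_mul]
      norm_num
    have heq2 : ∫⁻ s in Set.Ioi (1:ℝ),
        (ENNReal.ofReal s ^ ((7/10):ℝ) * Ψ s x) ^ ((30:ℝ)/11)
        = ∫⁻ s in Set.Ioi (1:ℝ), ENNReal.ofReal s ^ ((21:ℝ)/11) * Ψ s x ^ ((30:ℝ)/11) := by
      apply lintegral_congr
      intro s
      rw [ENNReal.mul_rpow_of_nonneg _ _ (by norm_num : (0:ℝ) ≤ 30/11), ← ENNReal.rpow_mul]
      norm_num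
    calc (∫⁻ s in Set.Ioi (1:ℝ), Ψ s x) ^ ((30:ℝ)/11)
        ≤ (K1 ^ (1/((30:ℝ)/19)) *
            (∫⁻ s in Set.Ioi (1:ℝ), ENNReal.ofReal s ^ ((21:ℝ)/11) * Ψ s x ^ ((30:ℝ)/11))
              ^ (1/((30:ℝ)/11))) ^ ((30:ℝ)/11) := by
          apply ENNReal.rpow_le_rpow _ (by norm_num : (0:ℝ) ≤ 30/11)
          rw [step1]
          refine step2.trans ?_
          rw [heq1, heq2]
      _ = K1 ^ ((19:ℝ)/11) *
            ∫⁻ s in Set.Ioi (1:ℝ), ENNReal.ofReal s ^ ((21:ℝ)/11) * Ψ s x ^ ((30:ℝ)/11) := by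
          rw [ENNReal.mul_rpow_of_nonneg _ _ (by norm_num : (0:ℝ) ≤ 30/11),
            ← ENNReal.rpow_mul, ← ENNReal.rpow_mul]
          norm_num
  -- scaling identity
  have hscale : ∀ s : ℝ, s ∈ Set.Ioi (1:ℝ) →
      ∫⁻ x : E3, Ψ s x ^ ((30:ℝ)/11) = ENNReal.ofReal s ^ (-(3:ℝ)) * Q := by
    intro s hs
    have hs1 : (1:ℝ) < s := hs
    have hs0 : s ≠ 0 := by linarith
    have hφmeas : Measurable (fun y : E3 => ENNReal.ofReal (gradNorm v y) ^ ((30:ℝ)/11)) :=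
      ENNReal.continuous_rpow_const.measurable.comp
        (ENNReal.measurable_ofReal.comp (gradNorm_continuous hv).measurable)
    have hmap := MeasureTheory.Measure.map_addHaar_smul (volume : Measure E3) hs0
    have hint : ∫⁻ x : E3, Ψ s x ^ ((30:ℝ)/11)
        = ∫⁻ y : E3, ENNReal.ofReal (gradNorm v y) ^ ((30:ℝ)/11)
            ∂(Measure.map (s • ·) volume) := by
      rw [lintegral_map hφmeas (measurable_const_smul s)]
    rw [hint, hmap, lintegral_smul_measure]
    congr 1
    rw [finrank_euclideanSpace_fin]
    have h1 : |(s ^ 3)⁻¹| = (s ^ 3)⁻¹ := abs_of_pos (by positivity)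
    rw [h1]
    have h2 : ENNReal.ofReal s ^ (-(3:ℝ)) = ENNReal.ofReal (s ^ (-(3:ℝ))) :=
      ENNReal.ofReal_rpow_of_pos (by linarith)
    rw [h2]
    congr 1
    rw [Real.rpow_neg (by linarith : (0:ℝ) ≤ s)]
    congr 1
    rw [← Real.rpow_natCast s 3]
    norm_num
  -- assemble
  have hmeas_joint : Measurable (Function.uncurry fun (x : E3) (s : ℝ) =>
      ENNReal.ofReal s ^ ((21:ℝ)/11) * Ψ s x ^ ((30:ℝ)/11)) := by
    apply Measurable.mul
    · apply ENNReal.continuous_rpow_const.measurable.comp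
      exact ENNReal.measurable_ofReal.comp measurable_snd
    · apply ENNReal.continuous_rpow_const.measurable.comp
      apply ENNReal.measurable_ofReal.comp
      have : Continuous (fun p : E3 × ℝ => gradNorm v (p.2 • p.1)) :=
        (gradNorm_continuous hv).comp (continuous_snd.smul continuous_fst)
      exact this.measurable
  calc ∫⁻ x : E3, ENNReal.ofReal (‖x‖⁻¹ * ‖v x‖) ^ ((30:ℝ)/11)
      ≤ ∫⁻ x : E3, (∫⁻ s in Set.Ioi (1:ℝ), Ψ s x) ^ ((30:ℝ)/11) := by
        apply lintegral_mono_ae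
        have hae : ∀ᵐ x : E3, x ≠ 0 := by
          rw [ae_iff]
          have : {x : E3 | ¬ x ≠ 0} = {0} := by
            ext y; simp
          rw [this]
          exact measure_singleton 0
        filter_upwards [hae] with x hx
        exact ENNReal.rpow_le_rpow (haux x hx) (by norm_num)
    _ ≤ ∫⁻ x : E3, K1 ^ ((19:ℝ)/11) *
          ∫⁻ s in Set.Ioi (1:ℝ), ENNReal.ofReal s ^ ((21:ℝ)/11) * Ψ s x ^ ((30:ℝ)/11) := by
        exact lintegral_mono fun x => hweight x
    _ = K1 ^ ((19:ℝ)/11) * ∫⁻ x : E3,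
          ∫⁻ s in Set.Ioi (1:ℝ), ENNReal.ofReal s ^ ((21:ℝ)/11) * Ψ s x ^ ((30:ℝ)/11) :=
        lintegral_const_mul' _ _ (ENNReal.rpow_ne_top_of_nonneg (by norm_num) K1_ne_top)
    _ = K1 ^ ((19:ℝ)/11) * ∫⁻ s in Set.Ioi (1:ℝ),
          ∫⁻ x : E3, ENNReal.ofReal s ^ ((21:ℝ)/11) * Ψ s x ^ ((30:ℝ)/11) := by
        congr 1
        exact lintegral_lintegral_swap hmeas_joint.aemeasurable
    _ = K1 ^ ((19:ℝ)/11) * ∫⁻ s in Set.Ioi (1:ℝ),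
          ENNReal.ofReal s ^ ((21:ℝ)/11) * (ENNReal.ofReal s ^ (-(3:ℝ)) * Q) := by
        congr 1
        apply setLIntegral_congr_fun measurableSet_Ioi
        intro s hs
        beta_reduce
        rw [lintegral_const_mul' _ _ (ENNReal.rpow_ne_top_of_nonneg (by norm_num)
          ENNReal.ofReal_ne_top)]
        rw [hscale s hs]
    _ = K1 ^ ((19:ℝ)/11) * ∫⁻ s in Set.Ioi (1:ℝ),
          (ENNReal.ofReal s ^ (-(12/11):ℝ)) * Q := by
        congr 1
        apply setLIntegral_congr_fun measurableSet_Ioi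
        intro s hs
        beta_reduce
        have h0 : ENNReal.ofReal s ≠ 0 := by
          simp only [ne_eq, ENNReal.ofReal_eq_zero, not_le]
          linarith [Set.mem_Ioi.1 hs]
        rw [← mul_assoc, ← ENNReal.rpow_add _ _ h0 ENNReal.ofReal_ne_top]
        norm_num
    _ = K1 ^ ((19:ℝ)/11) * (K2 * Q) := by
        congr 1
        rw [lintegral_mul_const'']
        · rfl
        · exact (ENNReal.continuous_rpow_const.measurable.comp
            ENNReal.measurable_ofReal).aemeasurable
    _ = K1 ^ ((19:ℝ)/11) * K2 * Q := by ring

end hardy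
section pert

open ENNReal

/-- The full fixed-time nonlinear estimate. -/
lemma per_t {v : E3 → ℂ} (hv : ContDiff ℝ (⊤ : ℕ∞) v) (hc : HasCompactSupport v) :
    (∫⁻ x : E3,
        ENNReal.ofReal (gradNorm (fun y => ((‖y‖⁻¹ * ‖v y‖ ^ 2 : ℝ) : ℂ) * v y) x)
          ^ ((6:ℝ)/5)) ^ ((5:ℝ)/6) ≤
      (cH ^ 2 + 5 * cH) *
        ((∫⁻ x : E3, ENNReal.ofReal ‖v x‖ ^ (10:ℝ)) ^ ((1:ℝ)/10) *
          ((∫⁻ x : E3, ENNReal.ofReal (gradNorm v x) ^ ((30:ℝ)/11)) ^ ((11:ℝ)/30)) ^ 2) := by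
  set U : E3 → ℝ≥0∞ := fun x => ENNReal.ofReal ‖v x‖ with hU
  set H : E3 → ℝ≥0∞ := fun x => ENNReal.ofReal (‖x‖⁻¹ * ‖v x‖) with hH
  set V : E3 → ℝ≥0∞ := fun x => ENNReal.ofReal (gradNorm v x) with hV
  have hUm : Measurable U := ENNReal.measurable_ofReal.comp hv.continuous.norm.measurable
  have hHm : Measurable H := by
    apply ENNReal.measurable_ofReal.comp
    exact (continuous_norm.measurable.inv).mul hv.continuous.norm.measurable
  have hVm : Measurable V :=
    ENNReal.measurable_ofReal.comp (gradNorm_continuous hv).measurable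
  set P := (∫⁻ x : E3, U x ^ (10:ℝ)) ^ ((1:ℝ)/10) with hP
  set R := (∫⁻ x : E3, H x ^ ((30:ℝ)/11)) ^ ((11:ℝ)/30) with hR
  set Q := (∫⁻ x : E3, V x ^ ((30:ℝ)/11)) ^ ((11:ℝ)/30) with hQ
  -- pointwise bound (a.e.)
  have step0 : ∀ᵐ x : E3, ENNReal.ofReal
      (gradNorm (fun y => ((‖y‖⁻¹ * ‖v y‖ ^ 2 : ℝ) : ℂ) * v y) x) ≤
        (fun x => U x * H x * H x + 5 * (U x * H x * V x)) x := by
    have hae : ∀ᵐ x : E3, x ≠ 0 := by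
      rw [ae_iff]
      have h1 : {x : E3 | ¬ x ≠ 0} = {0} := by ext y; simp
      rw [h1]
      exact measure_singleton 0
    filter_upwards [hae] with x hx
    have h1 := gradF_bound hv hx
    set a := ‖x‖⁻¹ * ‖v x‖ with ha
    set b := ‖v x‖ with hb
    set c := gradNorm v x with hcc
    have ha0 : 0 ≤ a := by positivity
    have hb0 : 0 ≤ b := norm_nonneg _
    have hc0 : 0 ≤ c := gradNorm_nonneg _ _
    have e1 : ENNReal.ofReal ((b * a) * a)
        = ENNReal.ofReal b * ENNReal.ofReal a * ENNReal.ofReal a := by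
      rw [ENNReal.ofReal_mul (mul_nonneg hb0 ha0), ENNReal.ofReal_mul hb0]
    have e2 : ENNReal.ofReal (5 * ((b * a) * c))
        = 5 * (ENNReal.ofReal b * ENNReal.ofReal a * ENNReal.ofReal c) := by
      rw [ENNReal.ofReal_mul (by norm_num : (0:ℝ) ≤ 5),
        ENNReal.ofReal_mul (mul_nonneg hb0 ha0), ENNReal.ofReal_mul hb0]
      norm_num
    calc ENNReal.ofReal (gradNorm (fun y => ((‖y‖⁻¹ * ‖v y‖ ^ 2 : ℝ) : ℂ) * v y) x)
        ≤ ENNReal.ofReal (a ^ 2 * b + 5 * (a * (b * c))) := ENNReal.ofReal_le_ofReal h1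
      _ = ENNReal.ofReal ((b * a) * a + 5 * ((b * a) * c)) := by
          congr 1
          ring
      _ = U x * H x * H x + 5 * (U x * H x * V x) := by
          rw [ENNReal.ofReal_add (by positivity) (by positivity), e1, e2]
  -- Minkowski
  have hfm : Measurable (fun x => U x * H x * H x) := (hUm.mul hHm).mul hHm
  have hgm : Measurable (fun x => (5:ℝ≥0∞) * (U x * H x * V x)) :=
    measurable_const.mul ((hUm.mul hHm).mul hVm)
  have step1 : (∫⁻ x : E3,
      ENNReal.ofReal (gradNorm (fun y => ((‖y‖⁻¹ * ‖v y‖ ^ 2 : ℝ) : ℂ) * v y) x)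
        ^ ((6:ℝ)/5)) ^ ((5:ℝ)/6) ≤
      (∫⁻ x : E3, (U x * H x * H x) ^ ((6:ℝ)/5)) ^ ((5:ℝ)/6) +
        (∫⁻ x : E3, ((5:ℝ≥0∞) * (U x * H x * V x)) ^ ((6:ℝ)/5)) ^ ((5:ℝ)/6) := by
    have hmono : (∫⁻ x : E3,
        ENNReal.ofReal (gradNorm (fun y => ((‖y‖⁻¹ * ‖v y‖ ^ 2 : ℝ) : ℂ) * v y) x)
          ^ ((6:ℝ)/5)) ≤
        ∫⁻ x : E3, ((fun x => U x * H x * H x) + fun x => (5:ℝ≥0∞) * (U x * H x * V x)) x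
          ^ ((6:ℝ)/5) := by
      apply lintegral_mono_ae
      filter_upwards [step0] with x hx
      apply ENNReal.rpow_le_rpow _ (by norm_num : (0:ℝ) ≤ 6/5)
      calc ENNReal.ofReal (gradNorm (fun y => ((‖y‖⁻¹ * ‖v y‖ ^ 2 : ℝ) : ℂ) * v y) x)
          ≤ U x * H x * H x + 5 * (U x * H x * V x) := hx
        _ = ((fun x => U x * H x * H x) + fun x => (5:ℝ≥0∞) * (U x * H x * V x)) x := rfl
    have hadd := ENNReal.lintegral_Lp_add_le (μ := (volume : Measure E3))
      (f := fun x => U x * H x * H x) (g := fun x => (5:ℝ≥0∞) * (U x * H x * V x))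
      hfm.aemeasurable hgm.aemeasurable (by norm_num : (1:ℝ) ≤ 6/5)
    have h56 : (1:ℝ)/((6:ℝ)/5) = (5:ℝ)/6 := by norm_num
    rw [h56] at hadd
    refine le_trans ?_ hadd
    exact ENNReal.rpow_le_rpow hmono (by norm_num)
  -- pull out the constant 5
  have step2 : (∫⁻ x : E3, ((5:ℝ≥0∞) * (U x * H x * V x)) ^ ((6:ℝ)/5)) ^ ((5:ℝ)/6) =
      5 * (∫⁻ x : E3, (U x * H x * V x) ^ ((6:ℝ)/5)) ^ ((5:ℝ)/6) := by
    have h1 : ∀ x : E3, ((5:ℝ≥0∞) * (U x * H x * V x)) ^ ((6:ℝ)/5)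
        = (5:ℝ≥0∞) ^ ((6:ℝ)/5) * (U x * H x * V x) ^ ((6:ℝ)/5) := fun x =>
      ENNReal.mul_rpow_of_nonneg _ _ (by norm_num)
    rw [lintegral_congr h1, lintegral_const_mul' _ _
      (ENNReal.rpow_ne_top_of_nonneg (by norm_num) (by norm_num)),
      ENNReal.mul_rpow_of_nonneg _ _ (by norm_num : (0:ℝ) ≤ 5/6), ← ENNReal.rpow_mul]
    norm_num
  -- Hölder
  have step3a : (∫⁻ x : E3, (U x * H x * H x) ^ ((6:ℝ)/5)) ^ ((5:ℝ)/6) ≤ P * (R * R) :=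
    lint_holder_triple volume hUm.aemeasurable hHm.aemeasurable hHm.aemeasurable
  have step3b : (∫⁻ x : E3, (U x * H x * V x) ^ ((6:ℝ)/5)) ^ ((5:ℝ)/6) ≤ P * (R * Q) :=
    lint_holder_triple volume hUm.aemeasurable hHm.aemeasurable hVm.aemeasurable
  -- Hardy
  have step4 : R ≤ cH * Q := by
    rw [hR, hQ, cH]
    calc (∫⁻ x : E3, H x ^ ((30:ℝ)/11)) ^ ((11:ℝ)/30)
        ≤ ((K1 ^ ((19:ℝ)/11) * K2) * ∫⁻ x : E3, V x ^ ((30:ℝ)/11)) ^ ((11:ℝ)/30) :=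
          ENNReal.rpow_le_rpow (hardy hv hc) (by norm_num)
      _ = _ := ENNReal.mul_rpow_of_nonneg _ _ (by norm_num)
  -- combine
  calc (∫⁻ x : E3,
      ENNReal.ofReal (gradNorm (fun y => ((‖y‖⁻¹ * ‖v y‖ ^ 2 : ℝ) : ℂ) * v y) x)
        ^ ((6:ℝ)/5)) ^ ((5:ℝ)/6)
      ≤ (∫⁻ x : E3, (U x * H x * H x) ^ ((6:ℝ)/5)) ^ ((5:ℝ)/6) +
          (∫⁻ x : E3, ((5:ℝ≥0∞) * (U x * H x * V x)) ^ ((6:ℝ)/5)) ^ ((5:ℝ)/6) := step1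
    _ = (∫⁻ x : E3, (U x * H x * H x) ^ ((6:ℝ)/5)) ^ ((5:ℝ)/6) +
          5 * (∫⁻ x : E3, (U x * H x * V x) ^ ((6:ℝ)/5)) ^ ((5:ℝ)/6) := by rw [step2]
    _ ≤ P * (R * R) + 5 * (P * (R * Q)) := by
        apply add_le_add step3a
        exact mul_le_mul_right step3b 5
    _ ≤ P * ((cH * Q) * (cH * Q)) + 5 * (P * ((cH * Q) * Q)) := by
        apply add_le_add
        · exact mul_le_mul_right (mul_le_mul' step4 step4) P
        · exact mul_le_mul_right (mul_le_mul_right (mul_le_mul_left step4 Q) P) 5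
    _ = (cH ^ 2 + 5 * cH) * (P * Q ^ 2) := by ring

end pert
section finiteness

open ENNReal

lemma inner_lint_le {f : ℝ × E3 → ℝ≥0∞} {K : Set (ℝ × E3)} (hK : IsCompact K)
    (M : ℝ≥0∞) (hf0 : ∀ p, p ∉ K → f p = 0) (hfM : ∀ p, f p ≤ M) (t : ℝ) :
    ∫⁻ x : E3, f (t, x) ≤ M * volume (Prod.snd '' K) := by
  have hKx : IsCompact (Prod.snd '' K) := hK.image continuous_snd
  calc ∫⁻ x : E3, f (t, x)
      ≤ ∫⁻ x : E3, (Prod.snd '' K).indicator (fun _ => M) x := by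
        apply lintegral_mono
        intro x
        by_cases hx : x ∈ Prod.snd '' K
        · rw [Set.indicator_of_mem hx]
          exact hfM _
        · rw [Set.indicator_of_notMem hx]
          have : f (t, x) = 0 := by
            apply hf0
            intro hmem
            exact hx ⟨(t, x), hmem, rfl⟩
          exact le_of_eq this
    _ = M * volume (Prod.snd '' K) := by
        rw [lintegral_indicator hKx.isClosed.measurableSet, setLIntegral_const]

lemma outer_lint_finite {f : ℝ × E3 → ℝ≥0∞} {K : Set (ℝ × E3)} (hK : IsCompact K)
    (M : ℝ≥0∞) (hM : M ≠ ⊤) (hf0 : ∀ p, p ∉ K → f p = 0) (hfM : ∀ p, f p ≤ M)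
    {e : ℝ} (he : 0 < e) (I : Set ℝ) :
    ∫⁻ t in I, (∫⁻ x : E3, f (t, x)) ^ e < ⊤ := by
  have hKx : IsCompact (Prod.snd '' K) := hK.image continuous_snd
  have hKt : IsCompact (Prod.fst '' K) := hK.image continuous_fst
  set B := M * volume (Prod.snd '' K) with hBdef
  have hB : B ≠ ⊤ := ENNReal.mul_ne_top hM hKx.measure_lt_top.ne
  have hbound : ∀ t : ℝ, (∫⁻ x : E3, f (t, x)) ^ e ≤
      (Prod.fst '' K).indicator (fun _ => B ^ e) t := by
    intro t
    by_cases ht : t ∈ Prod.fst '' K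
    · rw [Set.indicator_of_mem ht]
      exact ENNReal.rpow_le_rpow (inner_lint_le hK M hf0 hfM t) he.le
    · rw [Set.indicator_of_notMem ht]
      have h0 : ∀ x : E3, f (t, x) = 0 := by
        intro x
        apply hf0
        intro hmem
        exact ht ⟨(t, x), hmem, rfl⟩
      have : ∫⁻ x : E3, f (t, x) = 0 := by
        rw [lintegral_congr h0, lintegral_zero]
      rw [this, ENNReal.zero_rpow_of_pos he]
  calc ∫⁻ t in I, (∫⁻ x : E3, f (t, x)) ^ e
      ≤ ∫⁻ t in I, (Prod.fst '' K).indicator (fun _ => B ^ e) t :=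
        lintegral_mono fun t => hbound t
    _ ≤ ∫⁻ t, (Prod.fst '' K).indicator (fun _ => B ^ e) t :=
        lintegral_mono' Measure.restrict_le_self le_rfl
    _ = B ^ e * volume (Prod.fst '' K) := by
        rw [lintegral_indicator hKt.isClosed.measurableSet, setLIntegral_const]
    _ < ⊤ := ENNReal.mul_lt_top
        (ENNReal.rpow_ne_top_of_nonneg he.le hB).lt_top hKt.measure_lt_top

end finiteness
section main

open ENNReal

lemma rpow_nat_mul (z : ℝ≥0∞) (c : ℝ) (n : ℕ) : (z ^ c) ^ (n:ℕ) = z ^ (c * n) := by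
  rw [← ENNReal.rpow_natCast (z ^ c) n, ← ENNReal.rpow_mul]

noncomputable def Cf : ℝ≥0∞ := cH ^ 2 + 5 * cH

lemma Cf_ne_top : Cf ≠ ⊤ := by
  unfold Cf
  apply ENNReal.add_ne_top.2
  constructor
  · exact ENNReal.pow_ne_top cH_ne_top
  · exact ENNReal.mul_ne_top (by norm_num) cH_ne_top

/-- Nonlinear estimate in Strichartz spaces: there is a constant `C > 0` such that for
every smooth compactly supported `u : ℝ × ℝ³ → ℂ` and every interval `I ⊆ ℝ`,
`‖∇[|x|⁻¹|u|²u]‖_{L_t² L_x^{6/5}(I×ℝ³)} ≤ C ‖u‖_{L_{t,x}^{10}(I×ℝ³)}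
‖∇u‖²_{L_t⁵ L_x^{30/11}(I×ℝ³)}`. -/
theorem nonlinear_estimate :
    ∃ C : ℝ, 0 < C ∧
      ∀ u : ℝ × EuclideanSpace ℝ (Fin 3) → ℂ, ContDiff ℝ (⊤ : ℕ∞) u → HasCompactSupport u →
        ∀ I : Set ℝ, I.OrdConnected →
          (∫ t in I,
              (∫ x : EuclideanSpace ℝ (Fin 3),
                  (gradNorm
                      (fun y => ((‖y‖⁻¹ * ‖u (t, y)‖ ^ 2 : ℝ) : ℂ) * u (t, y)) x)
                    ^ (6 / 5 : ℝ)) ^ (5 / 3 : ℝ)) ^ ((1 : ℝ) / 2)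
            ≤ C * (∫ t in I, ∫ x : EuclideanSpace ℝ (Fin 3), ‖u (t, x)‖ ^ 10)
                    ^ ((1 : ℝ) / 10)
                * ((∫ t in I,
                      (∫ x : EuclideanSpace ℝ (Fin 3),
                          (gradNorm (fun y => u (t, y)) x) ^ (30 / 11 : ℝ))
                        ^ (11 / 6 : ℝ)) ^ ((1 : ℝ) / 5)) ^ 2 := by
  refine ⟨Cf.toReal + 1, by positivity, ?_⟩
  intro u hu hsupp I _
  -- nonnegativity of both RHS factors
  have hA0 : (0:ℝ) ≤ ∫ t in I, ∫ x : E3, ‖u (t, x)‖ ^ 10 :=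
    integral_nonneg fun t => integral_nonneg fun x => pow_nonneg (norm_nonneg _) _
  have hB0 : (0:ℝ) ≤ ∫ t in I,
      (∫ x : E3, (gradNorm (fun y => u (t, y)) x) ^ (30 / 11 : ℝ)) ^ (11 / 6 : ℝ) :=
    integral_nonneg fun t => Real.rpow_nonneg
      (integral_nonneg fun x => Real.rpow_nonneg (gradNorm_nonneg _ _) _) _
  have hRHS0 : (0:ℝ) ≤ (Cf.toReal + 1) *
      (∫ t in I, ∫ x : E3, ‖u (t, x)‖ ^ 10) ^ ((1:ℝ)/10) *
      ((∫ t in I, (∫ x : E3, (gradNorm (fun y => u (t, y)) x) ^ (30 / 11 : ℝ))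
        ^ (11 / 6 : ℝ)) ^ ((1:ℝ)/5)) ^ 2 := by
    apply mul_nonneg
    · apply mul_nonneg (by positivity)
      exact Real.rpow_nonneg hA0 _
    · exact sq_nonneg _
  -- the time-slice integrand
  set g : ℝ → ℝ := fun t =>
    (∫ x : E3, (gradNorm (fun y => ((‖y‖⁻¹ * ‖u (t, y)‖ ^ 2 : ℝ) : ℂ) * u (t, y)) x)
      ^ (6 / 5 : ℝ)) ^ (5 / 3 : ℝ) with hgdef
  by_cases hint : Integrable g (volume.restrict I)
  swap
  · -- non-integrable case : LHS = 0
    rw [show (∫ t in I,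
        (∫ x : E3, (gradNorm (fun y => ((‖y‖⁻¹ * ‖u (t, y)‖ ^ 2 : ℝ) : ℂ) * u (t, y)) x)
          ^ (6 / 5 : ℝ)) ^ (5 / 3 : ℝ)) = ∫ t in I, g t from rfl]
    rw [integral_undef hint, Real.zero_rpow (by norm_num : (1:ℝ)/2 ≠ 0)]
    exact hRHS0
  -- main case
  -- ennreal versions of the three quantities
  set ahat : ℝ → ℝ≥0∞ := fun t => ∫⁻ x : E3, ENNReal.ofReal (‖u (t, x)‖ ^ 10) with hahat
  set bhat : ℝ → ℝ≥0∞ := fun t =>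
    ∫⁻ x : E3, ENNReal.ofReal ((gradNorm (fun y => u (t, y)) x) ^ (30 / 11 : ℝ)) with hbhat
  set ghat : ℝ → ℝ≥0∞ := fun t =>
    ∫⁻ x : E3, ENNReal.ofReal
      ((gradNorm (fun y => ((‖y‖⁻¹ * ‖u (t, y)‖ ^ 2 : ℝ) : ℂ) * u (t, y)) x)
        ^ (6 / 5 : ℝ)) with hghat
  set AA := ∫⁻ t in I, ahat t with hAA
  set BB := ∫⁻ t in I, bhat t ^ ((11:ℝ)/6) with hBB
  -- measurability in t
  have hahatm : Measurable ahat := by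
    apply Measurable.lintegral_prod_right' (f := fun p : ℝ × E3 => ENNReal.ofReal (‖u p‖ ^ 10))
    exact ENNReal.measurable_ofReal.comp (hu.continuous.norm.pow 10).measurable
  have hbhatm : Measurable bhat := by
    apply Measurable.lintegral_prod_right'
      (f := fun p : ℝ × E3 => ENNReal.ofReal
        ((gradNorm (fun y => u (p.1, y)) p.2) ^ (30 / 11 : ℝ)))
    apply ENNReal.measurable_ofReal.comp
    exact ((Real.continuous_rpow_const (by norm_num)).comp
      (slice_gradNorm_continuous hu)).measurable
  -- bounds and finiteness
  obtain ⟨M0, hM0⟩ := hu.continuous.bounded_above_of_compact_support hsupp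
  obtain ⟨M1, hM1⟩ := (hu.continuous_fderiv (by simp)).bounded_above_of_compact_support
    (hsupp.fderiv ℝ)
  have hM1nn : (0:ℝ) ≤ M1 := le_trans (norm_nonneg _) (hM1 (0, 0))
  have hf0A : ∀ p : ℝ × E3, p ∉ tsupport u → ENNReal.ofReal (‖u p‖ ^ 10) = 0 := by
    intro p hp
    rw [image_eq_zero_of_notMem_tsupport hp]
    simp
  have hfMA : ∀ p : ℝ × E3, ENNReal.ofReal (‖u p‖ ^ 10) ≤ ENNReal.ofReal (M0 ^ 10) := by
    intro p
    apply ENNReal.ofReal_le_ofReal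
    exact pow_le_pow_left₀ (norm_nonneg _) (hM0 p) 10
  have hfin1 : ∀ J : Set ℝ, ∫⁻ t in J, (ahat t) ^ (1:ℝ) < ⊤ := by
    intro J
    have h := outer_lint_finite (f := fun p : ℝ × E3 => ENNReal.ofReal (‖u p‖ ^ 10))
      (K := tsupport u) hsupp (ENNReal.ofReal (M0 ^ 10)) ENNReal.ofReal_ne_top
      hf0A hfMA (e := 1) one_pos J
    exact h
  have hf0B : ∀ p : ℝ × E3, p ∉ tsupport (fderiv ℝ u) →
      ENNReal.ofReal ((gradNorm (fun y => u (p.1, y)) p.2) ^ (30 / 11 : ℝ)) = 0 := by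
    intro p hp
    have h0 : fderiv ℝ u (p.1, p.2) = 0 := by
      rw [Prod.mk.eta]
      exact image_eq_zero_of_notMem_tsupport hp
    rw [slice_gradNorm_zero p.1 p.2 h0 hu]
    rw [Real.zero_rpow (by norm_num : (30:ℝ)/11 ≠ 0)]
    simp
  have hfMB : ∀ p : ℝ × E3, ENNReal.ofReal ((gradNorm (fun y => u (p.1, y)) p.2)
      ^ (30 / 11 : ℝ)) ≤ ENNReal.ofReal ((Real.sqrt 3 * M1) ^ (30/11 : ℝ)) := by
    intro p
    apply ENNReal.ofReal_le_ofReal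
    apply Real.rpow_le_rpow (gradNorm_nonneg _ _) _ (by norm_num)
    refine (slice_gradNorm_le hu p.1 p.2).trans ?_
    apply mul_le_mul_of_nonneg_left _ (Real.sqrt_nonneg 3)
    calc ‖fderiv ℝ u (p.1, p.2)‖ = ‖fderiv ℝ u p‖ := by rw [Prod.mk.eta]
      _ ≤ M1 := hM1 p
  have hfin2 : ∀ J : Set ℝ, ∫⁻ t in J, (bhat t) ^ ((11:ℝ)/6) < ⊤ := by
    intro J
    have h := outer_lint_finite
      (f := fun p : ℝ × E3 => ENNReal.ofReal
        ((gradNorm (fun y => u (p.1, y)) p.2) ^ (30 / 11 : ℝ)))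
      (K := tsupport (fderiv ℝ u)) (hsupp.fderiv ℝ)
      (ENNReal.ofReal ((Real.sqrt 3 * M1) ^ (30/11 : ℝ))) ENNReal.ofReal_ne_top
      hf0B hfMB (e := (11:ℝ)/6) (by norm_num) J
    exact h
  have hAAfin : AA ≠ ⊤ := by
    rw [hAA]
    have := hfin1 I
    rw [show (∫⁻ t in I, (ahat t) ^ (1:ℝ)) = ∫⁻ t in I, ahat t by
      apply lintegral_congr; intro t; rw [ENNReal.rpow_one]] at this
    exact this.ne
  have hBBfin : BB ≠ ⊤ := (hfin2 I).ne
  have hahatfin : ∀ t, ahat t ≠ ⊤ := by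
    intro t
    apply ne_top_of_le_ne_top (ENNReal.mul_ne_top (a := ENNReal.ofReal (M0 ^ 10))
      ENNReal.ofReal_ne_top ((hsupp.image continuous_snd).measure_lt_top
        (μ := (volume : Measure E3))).ne)
    have h := inner_lint_le (f := fun p : ℝ × E3 => ENNReal.ofReal (‖u p‖ ^ 10))
      (K := tsupport u) hsupp (ENNReal.ofReal (M0 ^ 10)) hf0A hfMA t
    exact h
  have hbhatfin : ∀ t, bhat t ≠ ⊤ := by
    intro t
    apply ne_top_of_le_ne_top (ENNReal.mul_ne_top
      (a := ENNReal.ofReal ((Real.sqrt 3 * M1) ^ (30/11 : ℝ)))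
      ENNReal.ofReal_ne_top (((hsupp.fderiv ℝ).image continuous_snd).measure_lt_top
        (μ := (volume : Measure E3))).ne)
    have h := inner_lint_le (f := fun p : ℝ × E3 => ENNReal.ofReal
        ((gradNorm (fun y => u (p.1, y)) p.2) ^ (30 / 11 : ℝ)))
      (K := tsupport (fderiv ℝ u)) (hsupp.fderiv ℝ)
      (ENNReal.ofReal ((Real.sqrt 3 * M1) ^ (30/11 : ℝ))) hf0B hfMB t
    exact h
  -- RHS conversions (real integrals = toReal of lintegrals)
  have hinnerA : ∀ t : ℝ, (∫ x : E3, ‖u (t, x)‖ ^ 10) = (ahat t).toReal := by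
    intro t
    apply integral_eq_lintegral_of_nonneg_ae
    · exact Filter.Eventually.of_forall fun x => pow_nonneg (norm_nonneg _) _
    · exact ((hu.continuous.comp (continuous_const.prodMk continuous_id)).norm.pow
        10).aestronglyMeasurable
  have hArepr : (∫ t in I, ∫ x : E3, ‖u (t, x)‖ ^ 10) = AA.toReal := by
    rw [show (fun t => ∫ x : E3, ‖u (t, x)‖ ^ 10) = fun t => (ahat t).toReal from
      funext hinnerA]
    rw [integral_eq_lintegral_of_nonneg_ae
      (Filter.Eventually.of_forall fun t => ENNReal.toReal_nonneg)
      hahatm.ennreal_toReal.aestronglyMeasurable]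
    congr 1
    apply lintegral_congr
    intro t
    rw [ENNReal.ofReal_toReal (hahatfin t)]
  have hinnerB : ∀ t : ℝ,
      (∫ x : E3, (gradNorm (fun y => u (t, y)) x) ^ (30 / 11 : ℝ)) = (bhat t).toReal := by
    intro t
    apply integral_eq_lintegral_of_nonneg_ae
    · exact Filter.Eventually.of_forall fun x => Real.rpow_nonneg (gradNorm_nonneg _ _) _
    · exact ((Real.continuous_rpow_const (by norm_num)).comp
        (gradNorm_continuous (slice_contDiff hu t))).aestronglyMeasurable
  have hBrepr : (∫ t in I,
      (∫ x : E3, (gradNorm (fun y => u (t, y)) x) ^ (30 / 11 : ℝ)) ^ (11 / 6 : ℝ))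
      = BB.toReal := by
    have h1 : (fun t => (∫ x : E3,
        (gradNorm (fun y => u (t, y)) x) ^ (30 / 11 : ℝ)) ^ (11 / 6 : ℝ))
        = fun t => ((bhat t ^ ((11:ℝ)/6)).toReal) := by
      funext t
      rw [hinnerB t, ENNReal.toReal_rpow]
    rw [h1]
    have hm : AEStronglyMeasurable (fun t => (bhat t ^ ((11:ℝ)/6)).toReal)
        (volume.restrict I) := by
      apply Measurable.aestronglyMeasurable
      apply Measurable.ennreal_toReal
      exact ENNReal.continuous_rpow_const.measurable.comp hbhatm
    rw [integral_eq_lintegral_of_nonneg_ae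
      (Filter.Eventually.of_forall fun t => ENNReal.toReal_nonneg) hm]
    congr 1
    apply lintegral_congr
    intro t
    rw [ENNReal.ofReal_toReal (ENNReal.rpow_ne_top_of_nonneg (by norm_num) (hbhatfin t))]
  -- LHS representation
  have hinnerG : ∀ t : ℝ,
      (∫ x : E3, (gradNorm (fun y => ((‖y‖⁻¹ * ‖u (t, y)‖ ^ 2 : ℝ) : ℂ) * u (t, y)) x)
        ^ (6 / 5 : ℝ)) = (ghat t).toReal := by
    intro t
    apply integral_eq_lintegral_of_nonneg_ae
    · exact Filter.Eventually.of_forall fun x => Real.rpow_nonneg (gradNorm_nonneg _ _) _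
    · exact ((Real.continuous_rpow_const (by norm_num)).measurable.comp
        (gradNorm_measurable _)).aestronglyMeasurable
  set S0 := ∫⁻ t in I, ENNReal.ofReal (g t) with hS0
  have hLrepr : (∫ t in I, g t) = S0.toReal := by
    rw [hS0]
    apply integral_eq_lintegral_of_nonneg_ae
    · apply Filter.Eventually.of_forall
      intro t
      exact Real.rpow_nonneg (integral_nonneg fun x =>
        Real.rpow_nonneg (gradNorm_nonneg _ _) _) _
    · exact hint.aestronglyMeasurable
  -- per-time-slice estimate
  have hper : ∀ t : ℝ, (ghat t) ^ ((5:ℝ)/6) ≤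
      Cf * ((ahat t) ^ ((1:ℝ)/10) * ((bhat t) ^ ((11:ℝ)/30)) ^ 2) := by
    intro t
    have h := per_t (slice_contDiff hu t) (slice_hasCompactSupport hsupp t)
    have cA : (∫⁻ x : E3, ENNReal.ofReal ‖u (t, x)‖ ^ (10:ℝ)) = ahat t := by
      apply lintegral_congr
      intro x
      rw [ENNReal.ofReal_rpow_of_nonneg (norm_nonneg _) (by norm_num)]
      congr 1
      rw [show (10:ℝ) = ((10:ℕ):ℝ) by norm_num, Real.rpow_natCast]
    have cB : (∫⁻ x : E3, ENNReal.ofReal (gradNorm (fun y => u (t, y)) x) ^ ((30:ℝ)/11))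
        = bhat t := by
      apply lintegral_congr
      intro x
      rw [ENNReal.ofReal_rpow_of_nonneg (gradNorm_nonneg _ _) (by norm_num)]
    have cG : (∫⁻ x : E3, ENNReal.ofReal
        (gradNorm (fun y => ((‖y‖⁻¹ * ‖u (t, y)‖ ^ 2 : ℝ) : ℂ) * u (t, y)) x) ^ ((6:ℝ)/5))
        = ghat t := by
      apply lintegral_congr
      intro x
      rw [ENNReal.ofReal_rpow_of_nonneg (gradNorm_nonneg _ _) (by norm_num)]
    rw [cA, cB, cG] at h
    exact h
  -- squared version
  have hsq : ∀ t : ℝ, (ghat t) ^ ((5:ℝ)/3) ≤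
      Cf ^ (2:ℕ) * ((ahat t) ^ ((1:ℝ)/5) * (bhat t) ^ ((22:ℝ)/15)) := by
    intro t
    have h := hper t
    have h2 := mul_le_mul' h h
    have e0 : (ghat t) ^ ((5:ℝ)/3) = (ghat t ^ ((5:ℝ)/6)) * (ghat t ^ ((5:ℝ)/6)) := by
      rw [← pow_two, rpow_nat_mul]
      norm_num
    have e1 : ((ahat t) ^ ((1:ℝ)/10)) ^ (2:ℕ) = (ahat t) ^ ((1:ℝ)/5) := by
      rw [rpow_nat_mul]; norm_num
    have e2 : (((bhat t) ^ ((11:ℝ)/30)) ^ (2:ℕ)) ^ (2:ℕ) = (bhat t) ^ ((22:ℝ)/15) := by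
      rw [rpow_nat_mul, rpow_nat_mul]; norm_num
    calc (ghat t) ^ ((5:ℝ)/3)
        = (ghat t ^ ((5:ℝ)/6)) * (ghat t ^ ((5:ℝ)/6)) := e0
      _ ≤ (Cf * ((ahat t) ^ ((1:ℝ)/10) * ((bhat t) ^ ((11:ℝ)/30)) ^ 2)) *
            (Cf * ((ahat t) ^ ((1:ℝ)/10) * ((bhat t) ^ ((11:ℝ)/30)) ^ 2)) := h2
      _ = Cf ^ (2:ℕ) * (((ahat t) ^ ((1:ℝ)/10)) ^ (2:ℕ) *
            (((bhat t) ^ ((11:ℝ)/30)) ^ (2:ℕ)) ^ (2:ℕ)) := by ring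
      _ = Cf ^ (2:ℕ) * ((ahat t) ^ ((1:ℝ)/5) * (bhat t) ^ ((22:ℝ)/15)) := by rw [e1, e2]
  -- Hölder in time
  have hHt : ∫⁻ t in I, (ahat t) ^ ((1:ℝ)/5) * (bhat t) ^ ((22:ℝ)/15) ≤
      AA ^ ((1:ℝ)/5) * BB ^ ((4:ℝ)/5) := by
    have hconj : ((5:ℝ)).HolderConjugate ((5:ℝ)/4) := by constructor <;> norm_num
    have h := lint_holder_pair (μ := volume.restrict I)
      (f := fun t => (ahat t) ^ ((1:ℝ)/5)) (g := fun t => (bhat t) ^ ((22:ℝ)/15))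
      (hf := (ENNReal.continuous_rpow_const.measurable.comp hahatm).aemeasurable)
      (hg := (ENNReal.continuous_rpow_const.measurable.comp hbhatm).aemeasurable)
      (hpq := hconj)
    have c1 : (∫⁻ t in I, ((ahat t) ^ ((1:ℝ)/5)) ^ (5:ℝ)) = AA := by
      apply lintegral_congr
      intro t
      rw [← ENNReal.rpow_mul, show ((1:ℝ)/5 * 5) = (1:ℝ) by norm_num, ENNReal.rpow_one]
    have c2 : (∫⁻ t in I, ((bhat t) ^ ((22:ℝ)/15)) ^ ((5:ℝ)/4)) = BB := by
      apply lintegral_congr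
      intro t
      rw [← ENNReal.rpow_mul, show ((22:ℝ)/15 * (5/4)) = (11:ℝ)/6 by norm_num]
    rw [c1, c2, show (1/((5:ℝ)/4)) = (4:ℝ)/5 by norm_num, show (1/(5:ℝ)) = (1:ℝ)/5 by norm_num]
      at h
    exact h
  -- chain of bounds on S0
  have hS0chain : S0 ≤ Cf ^ (2:ℕ) * (AA ^ ((1:ℝ)/5) * BB ^ ((4:ℝ)/5)) := by
    have step1 : S0 ≤ ∫⁻ t in I, (ghat t) ^ ((5:ℝ)/3) := by
      apply lintegral_mono
      intro t
      show ENNReal.ofReal (g t) ≤ (ghat t) ^ ((5:ℝ)/3)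
      have hg : g t = ((ghat t).toReal) ^ (5/3 : ℝ) := by
        rw [hgdef]
        simp only []
        rw [hinnerG t]
      rw [hg, ENNReal.toReal_rpow]
      exact ENNReal.ofReal_toReal_le
    have step2 : ∫⁻ t in I, (ghat t) ^ ((5:ℝ)/3) ≤
        ∫⁻ t in I, Cf ^ (2:ℕ) * ((ahat t) ^ ((1:ℝ)/5) * (bhat t) ^ ((22:ℝ)/15)) :=
      lintegral_mono fun t => hsq t
    have step3 : ∫⁻ t in I, Cf ^ (2:ℕ) * ((ahat t) ^ ((1:ℝ)/5) * (bhat t) ^ ((22:ℝ)/15))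
        = Cf ^ (2:ℕ) * ∫⁻ t in I, (ahat t) ^ ((1:ℝ)/5) * (bhat t) ^ ((22:ℝ)/15) :=
      lintegral_const_mul' _ _ (ENNReal.pow_ne_top Cf_ne_top)
    calc S0 ≤ ∫⁻ t in I, (ghat t) ^ ((5:ℝ)/3) := step1
      _ ≤ ∫⁻ t in I, Cf ^ (2:ℕ) * ((ahat t) ^ ((1:ℝ)/5) * (bhat t) ^ ((22:ℝ)/15)) := step2
      _ = Cf ^ (2:ℕ) * ∫⁻ t in I, (ahat t) ^ ((1:ℝ)/5) * (bhat t) ^ ((22:ℝ)/15) := step3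
      _ ≤ Cf ^ (2:ℕ) * (AA ^ ((1:ℝ)/5) * BB ^ ((4:ℝ)/5)) := mul_le_mul_right hHt _
  -- take square roots
  have hfinal : S0 ^ ((1:ℝ)/2) ≤ Cf * (AA ^ ((1:ℝ)/10) * BB ^ ((2:ℝ)/5)) := by
    calc S0 ^ ((1:ℝ)/2)
        ≤ (Cf ^ (2:ℕ) * (AA ^ ((1:ℝ)/5) * BB ^ ((4:ℝ)/5))) ^ ((1:ℝ)/2) :=
          ENNReal.rpow_le_rpow hS0chain (by norm_num)
      _ = Cf * (AA ^ ((1:ℝ)/10) * BB ^ ((2:ℝ)/5)) := by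
          rw [ENNReal.mul_rpow_of_nonneg _ _ (by norm_num : (0:ℝ) ≤ 1/2),
            ENNReal.mul_rpow_of_nonneg _ _ (by norm_num : (0:ℝ) ≤ 1/2)]
          congr 1
          · rw [← ENNReal.rpow_natCast Cf 2, ← ENNReal.rpow_mul]
            norm_num
          · congr 1
            · rw [← ENNReal.rpow_mul]; norm_num
            · rw [← ENNReal.rpow_mul]; norm_num
  -- conclude in ℝ
  have hZfin : Cf * (AA ^ ((1:ℝ)/10) * BB ^ ((2:ℝ)/5)) ≠ ⊤ := by
    apply ENNReal.mul_ne_top Cf_ne_top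
    exact ENNReal.mul_ne_top (ENNReal.rpow_ne_top_of_nonneg (by norm_num) hAAfin)
      (ENNReal.rpow_ne_top_of_nonneg (by norm_num) hBBfin)
  have hLHS : (∫ t in I, g t) ^ ((1:ℝ)/2) ≤
      Cf.toReal * ((AA ^ ((1:ℝ)/10)).toReal * (BB ^ ((2:ℝ)/5)).toReal) := by
    rw [hLrepr, ENNReal.toReal_rpow]
    calc (S0 ^ ((1:ℝ)/2)).toReal
        ≤ (Cf * (AA ^ ((1:ℝ)/10) * BB ^ ((2:ℝ)/5))).toReal :=
          ENNReal.toReal_mono hZfin hfinal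
      _ = Cf.toReal * ((AA ^ ((1:ℝ)/10)).toReal * (BB ^ ((2:ℝ)/5)).toReal) := by
          rw [ENNReal.toReal_mul, ENNReal.toReal_mul]
  -- identify goal with our quantities
  have hgoalRHS : (Cf.toReal + 1) *
      (∫ t in I, ∫ x : E3, ‖u (t, x)‖ ^ 10) ^ ((1:ℝ)/10) *
      ((∫ t in I, (∫ x : E3, (gradNorm (fun y => u (t, y)) x) ^ (30 / 11 : ℝ))
        ^ (11 / 6 : ℝ)) ^ ((1:ℝ)/5)) ^ 2
      = (Cf.toReal + 1) * ((AA ^ ((1:ℝ)/10)).toReal * (BB ^ ((2:ℝ)/5)).toReal) := by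
    rw [hArepr, hBrepr]
    rw [ENNReal.toReal_rpow, ENNReal.toReal_rpow]
    rw [← ENNReal.toReal_pow]
    rw [rpow_nat_mul]
    rw [show ((1:ℝ)/5 * (2:ℕ)) = (2:ℝ)/5 by push_cast; norm_num]
    ring
  calc (∫ t in I, g t) ^ ((1:ℝ)/2)
      ≤ Cf.toReal * ((AA ^ ((1:ℝ)/10)).toReal * (BB ^ ((2:ℝ)/5)).toReal) := hLHS
    _ ≤ (Cf.toReal + 1) * ((AA ^ ((1:ℝ)/10)).toReal * (BB ^ ((2:ℝ)/5)).toReal) := by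
        apply mul_le_mul_of_nonneg_right (by linarith [ENNReal.toReal_nonneg (a := Cf)])
        exact mul_nonneg ENNReal.toReal_nonneg ENNReal.toReal_nonneg
    _ = _ := hgoalRHS.symm

end main
end
end
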